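/- arXiv:math/0004148 — 7 statements merged into one kernel-verified Lean document; each statement's English description precedes it below -/
import Mathlib

section
/- Let M be a Banach manifold, E a Banach space, f : M → ℝ and g : M → E maps of class C¹, and p ∈ g⁻¹(0) a point at which g is a submersion (dg(p) is surjective with complemented kernel). Then p is a critical point of the restriction f|_{g⁻¹(0)} if and only if there exists a continuous linear functional λ ∈ E* such that p is a critical point of f − λ ∘ g on M. -/
theorem lagrange_aux {B E : Type*} [NormedAddCommGroup B] [NormedSpace ℝ B] [CompleteSpace B]
    [NormedAddCommGroup E] [NormedSpace ℝ E] [CompleteSpace E]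
    (φ : B →L[ℝ] ℝ) (T : B →L[ℝ] E) (hsurj : Function.Surjective T)
    (hcompl : (LinearMap.ker (T : B →ₗ[ℝ] E)).ClosedComplemented) :
    (∀ v ∈ LinearMap.ker (T : B →ₗ[ℝ] E), φ v = 0) ↔ ∃ lam : E →L[ℝ] ℝ, ∀ v, φ v = lam (T v) := by
  constructor
  · intro h
    obtain ⟨q, hqclosed, hq⟩ := hcompl.exists_isClosed_isCompl
    haveI : CompleteSpace q := hqclosed.completeSpace_coe
    set Tq : q →L[ℝ] E := T.comp q.subtypeL with hTq
    have hker : LinearMap.ker (Tq : q →ₗ[ℝ] E) = ⊥ := by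
      rw [LinearMap.ker_eq_bot']
      rintro ⟨w, hw⟩ hzw
      have : w ∈ LinearMap.ker (T : B →ₗ[ℝ] E) := hzw
      have : w ∈ LinearMap.ker (T : B →ₗ[ℝ] E) ⊓ q := ⟨this, hw⟩
      rw [hq.inf_eq_bot] at this
      exact Subtype.ext this
    have hrange : LinearMap.range (Tq : q →ₗ[ℝ] E) = ⊤ := by
      rw [LinearMap.range_eq_top]
      intro e
      obtain ⟨v, hv⟩ := hsurj e
      have hv' : v ∈ LinearMap.ker (T : B →ₗ[ℝ] E) ⊔ q := by rw [hq.sup_eq_top]; trivial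
      obtain ⟨k, hk, w, hw, rfl⟩ := Submodule.mem_sup.1 hv'
      refine ⟨⟨w, hw⟩, ?_⟩
      simp only [hTq, ContinuousLinearMap.comp_apply, Submodule.subtypeL_apply]
      rw [← hv, map_add, (show T k = 0 from LinearMap.mem_ker.1 hk), zero_add]; rfl
    set e := ContinuousLinearEquiv.ofBijective Tq hker hrange
    refine ⟨φ.comp (q.subtypeL.comp (e.symm : E →L[ℝ] q)), fun v => ?_⟩
    have hv' : v ∈ LinearMap.ker (T : B →ₗ[ℝ] E) ⊔ q := by rw [hq.sup_eq_top]; trivial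
    obtain ⟨k, hk, w, hw, rfl⟩ := Submodule.mem_sup.1 hv'
    have h1 : T (k + w) = Tq ⟨w, hw⟩ := by
      simp [hTq, map_add, (show T k = 0 from LinearMap.mem_ker.1 hk)]
    rw [ContinuousLinearMap.comp_apply, ContinuousLinearMap.comp_apply, h1]
    have h2 : (e.symm : E →L[ℝ] q) (Tq ⟨w, hw⟩) = ⟨w, hw⟩ :=
      ContinuousLinearEquiv.ofBijective_symm_apply_apply Tq hker hrange ⟨w, hw⟩
    rw [h2, map_add, h k hk, zero_add]
    rfl
  · rintro ⟨lam, hlam⟩ v hv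
    rw [hlam v, (show T v = 0 from LinearMap.mem_ker.1 hv), map_zero]



/-- Lagrange multipliers on Banach manifolds: let `M` be a Banach manifold,
`f : M → ℝ`, `g : M → E` of class `C¹`, `p ∈ g⁻¹(0)` a point where `g` is a submersion
(`dg(p)` surjective with complemented kernel). Then `p` is a critical point of
`f|_{g⁻¹(0)}` (i.e. `df(p)` vanishes on `ker dg(p)`) iff there is `λ ∈ E*` such that
`p` is a critical point of `f − λ ∘ g`, i.e. `df(p) = λ ∘ dg(p)`. -/
theorem lagrange_multiplier_banach_manifold
    (B : Type*) [NormedAddCommGroup B] [NormedSpace ℝ B] [CompleteSpace B]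
    (M : Type*) [TopologicalSpace M] [ChartedSpace B M]
    [IsManifold (modelWithCornersSelf ℝ B) (⊤ : ℕ∞) M]
    (E : Type*) [NormedAddCommGroup E] [NormedSpace ℝ E] [CompleteSpace E]
    (f : M → ℝ) (g : M → E)
    (hf : ContMDiff (modelWithCornersSelf ℝ B) (modelWithCornersSelf ℝ ℝ) 1 f)
    (hg : ContMDiff (modelWithCornersSelf ℝ B) (modelWithCornersSelf ℝ E) 1 g)
    (p : M) (hp : g p = 0)
    (hsurj : Function.Surjective
      (mfderiv (modelWithCornersSelf ℝ B) (modelWithCornersSelf ℝ E) g p))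
    (hcompl : (LinearMap.ker
      ((mfderiv (modelWithCornersSelf ℝ B) (modelWithCornersSelf ℝ E) g p :
        TangentSpace (modelWithCornersSelf ℝ B) p →ₗ[ℝ] TangentSpace (modelWithCornersSelf ℝ E) (g p)))).ClosedComplemented) :
    (∀ v ∈ LinearMap.ker
        ((mfderiv (modelWithCornersSelf ℝ B) (modelWithCornersSelf ℝ E) g p :
          TangentSpace (modelWithCornersSelf ℝ B) p →ₗ[ℝ] TangentSpace (modelWithCornersSelf ℝ E) (g p))),
        mfderiv (modelWithCornersSelf ℝ B) (modelWithCornersSelf ℝ ℝ) f p v = 0)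
      ↔ ∃ lam : E →L[ℝ] ℝ, ∀ v,
          mfderiv (modelWithCornersSelf ℝ B) (modelWithCornersSelf ℝ ℝ) f p v
            = lam (mfderiv (modelWithCornersSelf ℝ B) (modelWithCornersSelf ℝ E) g p v) := by
  exact lagrange_aux
    (show B →L[ℝ] ℝ from mfderiv (modelWithCornersSelf ℝ B) (modelWithCornersSelf ℝ ℝ) f p)
    (show B →L[ℝ] E from mfderiv (modelWithCornersSelf ℝ B) (modelWithCornersSelf ℝ E) g p)
    hsurj hcompl
end

section
/- Let V be a finite-dimensional real vector space and let D⁰([a,b],V) denote the continuous dual of the Banach space C⁰₀([a,b],V*) of continuous V*-valued functions vanishing at a and b (with sup norm). If f ∈ D⁰([a,b],V) satisfies ⟨f, α'⟩ = 0 for every C¹ function α : [a,b] → V* with α(a) = α(b) = 0 and α'(a) = α'(b) = 0, then f is a constant function, i.e., there exists c ∈ V such that ⟨f, α⟩ = ∫_a^b α(t)(c) dt for all α ∈ C⁰₀([a,b],V*). -/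
/-- `α` belongs to `C^k₀([a,b],E)`: it is `C^k` and its derivatives of order `≤ k`
vanish at `a` and `b`. -/
def MemCk0 (k : ℕ) (a b : ℝ) {E : Type*} [NormedAddCommGroup E] [NormedSpace ℝ E]
    (α : ℝ → E) : Prop :=
  ContDiff ℝ k α ∧ ∀ j ≤ k, iteratedDeriv j α a = 0 ∧ iteratedDeriv j α b = 0

/-- The `C^k` norm of `α` on `[a,b]` is bounded by `K`. -/
def CkNormLe (k : ℕ) (a b : ℝ) {E : Type*} [NormedAddCommGroup E] [NormedSpace ℝ E]
    (α : ℝ → E) (K : ℝ) : Prop :=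
  ∀ j ≤ k, ∀ t ∈ Set.Icc a b, ‖iteratedDeriv j α t‖ ≤ K

/-- `f` represents an element of `D^k([a,b],V)`, the continuous dual of
`C^k₀([a,b],V*)`: it is linear and bounded on `C^k₀` test functions. -/
structure IsDk (k : ℕ) (a b : ℝ) {V : Type*} [NormedAddCommGroup V] [NormedSpace ℝ V]
    (f : (ℝ → (V →L[ℝ] ℝ)) → ℝ) : Prop where
  map_add : ∀ α β, MemCk0 k a b α → MemCk0 k a b β → f (α + β) = f α + f β
  map_smul : ∀ (c : ℝ) (α), MemCk0 k a b α → f (c • α) = c * f α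
  bound : ∃ C : ℝ, ∀ α K, MemCk0 k a b α → CkNormLe k a b α K → |f α| ≤ C * K

lemma exists_bump_aux (a b : ℝ) (hab : a < b) :
    ∃ ψ : ℝ → ℝ, Continuous ψ ∧ ψ a = 0 ∧ ψ b = 0 ∧ (∫ t in a..b, ψ t) = 1 := by
  refine ⟨fun t => 6/(b-a)^3 * ((t-a)*(b-t)), ?_, by simp, by simp, ?_⟩
  · exact continuous_const.mul ((continuous_id.sub continuous_const).mul
      (continuous_const.sub continuous_id))
  · have h : ∀ t : ℝ, 6/(b-a)^3 * ((t-a)*(b-t))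
        = (6/(b-a)^3) * ((a+b)*t - t^2 - a*b) := by intro t; ring
    simp_rw [h]
    rw [intervalIntegral.integral_const_mul]
    have h1 : IntervalIntegrable (fun t : ℝ => (a+b)*t) MeasureTheory.volume a b :=
      (continuous_const.mul continuous_id).intervalIntegrable _ _
    have h2 : IntervalIntegrable (fun t : ℝ => t^2) MeasureTheory.volume a b :=
      (continuous_pow 2).intervalIntegrable _ _
    have h3 : IntervalIntegrable (fun t : ℝ => a*b) MeasureTheory.volume a b :=
      continuous_const.intervalIntegrable _ _
    rw [intervalIntegral.integral_sub (h1.sub h2) h3, intervalIntegral.integral_sub h1 h2,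
      intervalIntegral.integral_const_mul, integral_id, integral_pow,
      intervalIntegral.integral_const]
    have hba : b - a ≠ 0 := sub_ne_zero.mpr hab.ne'
    field_simp
    ring

theorem generalized_function_deriv_zero_const'
    (V : Type*) [NormedAddCommGroup V] [NormedSpace ℝ V] [FiniteDimensional ℝ V]
    (a b : ℝ) (hab : a < b)
    (f : (ℝ → (V →L[ℝ] ℝ)) → ℝ)
    (hadd : ∀ α β, (ContDiff ℝ 0 α ∧ ∀ j ≤ 0, iteratedDeriv j α a = 0 ∧ iteratedDeriv j α b = 0) →
      (ContDiff ℝ 0 β ∧ ∀ j ≤ 0, iteratedDeriv j β a = 0 ∧ iteratedDeriv j β b = 0) →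
      f (α + β) = f α + f β)
    (hsmul : ∀ (c : ℝ) (α), (ContDiff ℝ 0 α ∧ ∀ j ≤ 0, iteratedDeriv j α a = 0 ∧ iteratedDeriv j α b = 0) →
      f (c • α) = c * f α)
    (hder : ∀ α : ℝ → (V →L[ℝ] ℝ), ContDiff ℝ 1 α → α a = 0 → α b = 0 →
      deriv α a = 0 → deriv α b = 0 → f (deriv α) = 0) :
    ∃ c : V, ∀ α : ℝ → (V →L[ℝ] ℝ),
      (ContDiff ℝ 0 α ∧ ∀ j ≤ 0, iteratedDeriv j α a = 0 ∧ iteratedDeriv j α b = 0) →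
      f α = ∫ t in a..b, α t c := by
  have hmem : ∀ α : ℝ → (V →L[ℝ] ℝ), Continuous α → α a = 0 → α b = 0 →
      (ContDiff ℝ 0 α ∧ ∀ j ≤ 0, iteratedDeriv j α a = 0 ∧ iteratedDeriv j α b = 0) := by
    intro α hc ha hb
    refine ⟨contDiff_zero.mpr hc, ?_⟩
    intro j hj
    interval_cases j
    simpa [iteratedDeriv_zero] using ⟨ha, hb⟩
  obtain ⟨ψ, hψcont, hψa, hψb, hψint⟩ := exists_bump_aux a b hab
  have hgmem : ∀ w : V →L[ℝ] ℝ,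
      (ContDiff ℝ 0 (fun t => ψ t • w) ∧ ∀ j ≤ 0, iteratedDeriv j (fun t => ψ t • w) a = 0 ∧
        iteratedDeriv j (fun t => ψ t • w) b = 0) := by
    intro w
    exact hmem _ (hψcont.smul continuous_const) (by simp [hψa]) (by simp [hψb])
  -- f vanishes on continuous functions with zero endpoints and zero integral
  have hzero : ∀ β : ℝ → (V →L[ℝ] ℝ), Continuous β → β a = 0 → β b = 0 →
      (∫ t in a..b, β t) = 0 → f β = 0 := by
    intro β hβc hβa hβb hβint
    obtain ⟨A, hAdef⟩ : ∃ A : ℝ → (V →L[ℝ] ℝ), A = fun t => ∫ s in a..t, β s := ⟨_, rfl⟩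
    have hderivA : deriv A = β := by
      funext t
      rw [hAdef]
      exact Continuous.deriv_integral β hβc a t
    have hdiffA : Differentiable ℝ A := by
      rw [hAdef]
      exact fun t => ((hβc.integral_hasStrictDerivAt a t).hasDerivAt).differentiableAt
    have hC1 : ContDiff ℝ 1 A := by
      rw [contDiff_one_iff_deriv]
      exact ⟨hdiffA, hderivA ▸ hβc⟩
    have hAa : A a = 0 := by rw [hAdef]; exact intervalIntegral.integral_same
    have hAb : A b = 0 := by rw [hAdef]; exact hβint
    have := hder A hC1 hAa hAb (by rw [hderivA]; exact hβa) (by rw [hderivA]; exact hβb)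
    rwa [hderivA] at this
  -- linearity of w ↦ f (ψ • w)
  have key_add : ∀ w w' : V →L[ℝ] ℝ,
      f (fun t => ψ t • (w + w')) = f (fun t => ψ t • w) + f (fun t => ψ t • w') := by
    intro w w'
    have h : (fun t => ψ t • (w + w')) = (fun t => ψ t • w) + (fun t => ψ t • w') := by
      funext t
      show ψ t • (w + w') = ψ t • w + ψ t • w'
      exact smul_add _ _ _
    rw [h]
    exact hadd _ _ (hgmem w) (hgmem w')
  have key_smul : ∀ (r : ℝ) (w : V →L[ℝ] ℝ),
      f (fun t => ψ t • (r • w)) = r * f (fun t => ψ t • w) := by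
    intro r w
    have h : (fun t => ψ t • (r • w)) = r • (fun t => ψ t • w) := by
      funext t
      show ψ t • (r • w) = r • (ψ t • w)
      exact (smul_comm r (ψ t) w).symm
    rw [h]
    exact hsmul r _ (hgmem w)
  obtain ⟨Ld, hLddef⟩ : ∃ Ld : Module.Dual ℝ V →ₗ[ℝ] ℝ,
      ∀ g : Module.Dual ℝ V, Ld g = f (fun t => ψ t • (LinearMap.toContinuousLinearMap g)) := by
    refine ⟨{ toFun := fun g => f (fun t => ψ t • (LinearMap.toContinuousLinearMap g))
              map_add' := ?_, map_smul' := ?_ }, fun g => rfl⟩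
    · intro g g'
      show f (fun t => ψ t • (LinearMap.toContinuousLinearMap (g + g')))
        = f (fun t => ψ t • (LinearMap.toContinuousLinearMap g))
          + f (fun t => ψ t • (LinearMap.toContinuousLinearMap g'))
      rw [map_add]
      exact key_add _ _
    · intro r g
      show f (fun t => ψ t • (LinearMap.toContinuousLinearMap (r • g)))
        = r * f (fun t => ψ t • (LinearMap.toContinuousLinearMap g))
      rw [map_smul]
      exact key_smul r _
  obtain ⟨c, hc⟩ : ∃ c : V, (Module.evalEquiv ℝ V) c = Ld :=
    ⟨(Module.evalEquiv ℝ V).symm Ld, (Module.evalEquiv ℝ V).apply_symm_apply Ld⟩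
  have hLcw : ∀ w : V →L[ℝ] ℝ, f (fun t => ψ t • w) = w c := by
    intro w
    have h2 : Ld (w : V →ₗ[ℝ] ℝ) = (w : V →ₗ[ℝ] ℝ) c := by
      rw [← hc]; simp [Module.evalEquiv_apply]
    have h3 : LinearMap.toContinuousLinearMap ((w : V →ₗ[ℝ] ℝ)) = w := by
      ext x; simp
    rw [hLddef, h3] at h2
    exact h2
  refine ⟨c, ?_⟩
  intro α hα
  obtain ⟨hα0, hα1⟩ := hα
  have hαcont : Continuous α := contDiff_zero.mp hα0
  have hαa : α a = 0 := by simpa [iteratedDeriv_zero] using (hα1 0 le_rfl).1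
  have hαb : α b = 0 := by simpa [iteratedDeriv_zero] using (hα1 0 le_rfl).2
  obtain ⟨w, hw⟩ : ∃ w : V →L[ℝ] ℝ, w = ∫ t in a..b, α t := ⟨_, rfl⟩
  have hαint : IntervalIntegrable α MeasureTheory.volume a b := hαcont.intervalIntegrable a b
  have hψwint : IntervalIntegrable (fun t => ψ t • w) MeasureTheory.volume a b :=
    (hψcont.smul continuous_const).intervalIntegrable a b
  obtain ⟨β, hβ⟩ : ∃ β : ℝ → (V →L[ℝ] ℝ), β = fun t => α t - ψ t • w := ⟨_, rfl⟩
  have hβcont : Continuous β := hβ ▸ hαcont.sub (hψcont.smul continuous_const)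
  have hβa : β a = 0 := by rw [hβ]; simp [hαa, hψa]
  have hβb : β b = 0 := by rw [hβ]; simp [hαb, hψb]
  have hβint : (∫ t in a..b, β t) = 0 := by
    rw [hβ, intervalIntegral.integral_sub hαint hψwint, intervalIntegral.integral_smul_const,
      hψint, one_smul, ← hw, sub_self]
  have hfβ : f β = 0 := hzero β hβcont hβa hβb hβint
  have hsplit : α = β + (fun t => ψ t • w) := by
    funext t
    rw [hβ]
    show α t = (α t - ψ t • w) + ψ t • w
    abel
  have hfα : f α = f β + f (fun t => ψ t • w) := by
    rw [hsplit]
    exact hadd _ _ (hmem β hβcont hβa hβb) (hgmem w)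
  rw [hfα, hfβ, zero_add, hLcw w, hw]
  exact ContinuousLinearMap.intervalIntegral_apply hαint c

/-- if `f ∈ D⁰([a,b],V)` satisfies `⟨f, α'⟩ = 0` for every `C¹` test
function `α` vanishing, together with its derivative, at `a` and `b`, then `f` is a
constant function: there is `c ∈ V` with `⟨f, α⟩ = ∫_a^b α(t)(c) dt` for all
`α ∈ C⁰₀([a,b],V*)`. -/
theorem generalized_function_deriv_zero_const
    (V : Type*) [NormedAddCommGroup V] [NormedSpace ℝ V] [FiniteDimensional ℝ V]
    (a b : ℝ) (hab : a < b)
    (f : (ℝ → (V →L[ℝ] ℝ)) → ℝ) (hf : IsDk 0 a b f)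
    (hder : ∀ α : ℝ → (V →L[ℝ] ℝ), ContDiff ℝ 1 α → α a = 0 → α b = 0 →
      deriv α a = 0 → deriv α b = 0 → f (deriv α) = 0) :
    ∃ c : V, ∀ α : ℝ → (V →L[ℝ] ℝ), MemCk0 0 a b α →
      f α = ∫ t in a..b, α t c := by
  exact generalized_function_deriv_zero_const' V a b hab f hf.map_add hf.map_smul hder
end

section
/- Let V be a finite-dimensional real vector space and k ≥ 1. The derivation map d : C^{k+1}₀([a,b],V*) → C^k₀([a,b],V*), α ↦ α', is an injective bounded linear map with closed image. Consequently its transpose d* : D^k([a,b],V) → D^{k+1}([a,b],V) is surjective; equivalently, every generalized function f ∈ D^{k+1}([a,b],V) admits a primitive F ∈ D^k([a,b],V) with F' = f. -/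
open Set MeasureTheory intervalIntegral

section Calculus

variable {E : Type*} [NormedAddCommGroup E] [NormedSpace ℝ E] {a b K : ℝ} {k : ℕ}

lemma MemCk0.apply_left {α : ℝ → E} (hα : MemCk0 k a b α) : α a = 0 := by
  simpa using (hα.2 0 k.zero_le).1

lemma MemCk0.apply_right {α : ℝ → E} (hα : MemCk0 k a b α) : α b = 0 := by
  simpa using (hα.2 0 k.zero_le).2

lemma MemCk0.differentiable {α : ℝ → E} (hα : MemCk0 (k + 1) a b α) : Differentiable ℝ α :=
  hα.1.differentiable (by simp)

lemma iteratedDeriv_eq_zero_of_notMem_tsupport {f : ℝ → E} {x : ℝ} (hx : x ∉ tsupport f)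
    (n : ℕ) : iteratedDeriv n f x = 0 := by
  rw [iteratedDeriv_eq_iteratedFDeriv,
    Function.notMem_support.mp fun h => hx (support_iteratedFDeriv_subset n h)]
  rfl

lemma memCk0_of_tsupport_subset_Ioo {φ : ℝ → E} (hφ : ContDiff ℝ k φ)
    (hsupp : tsupport φ ⊆ Ioo a b) : MemCk0 k a b φ :=
  ⟨hφ, fun j _ => ⟨iteratedDeriv_eq_zero_of_notMem_tsupport (fun h => (hsupp h).1.false) j,
    iteratedDeriv_eq_zero_of_notMem_tsupport (fun h => (hsupp h).2.false) j⟩⟩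

lemma exists_ckNormLe {α : ℝ → E} (hα : ContDiff ℝ k α) (a b : ℝ) :
    ∃ M, CkNormLe k a b α M := by
  have hcont : Continuous fun t => ∑ j ∈ Finset.range (k + 1), ‖iteratedDeriv j α t‖ :=
    continuous_finsetSum _ fun j hj =>
      (hα.continuous_iteratedDeriv j (by exact_mod_cast Finset.mem_range_succ_iff.1 hj)).norm
  obtain ⟨M, hM⟩ := isCompact_Icc.exists_bound_of_continuousOn hcont.continuousOn
  refine ⟨M, fun j hj t ht => ?_⟩
  calc ‖iteratedDeriv j α t‖
      ≤ ∑ i ∈ Finset.range (k + 1), ‖iteratedDeriv i α t‖ :=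
        Finset.single_le_sum (f := fun i => ‖iteratedDeriv i α t‖) (fun i _ => norm_nonneg _)
          (Finset.mem_range_succ_iff.2 hj)
    _ ≤ ‖∑ i ∈ Finset.range (k + 1), ‖iteratedDeriv i α t‖‖ := Real.le_norm_self _
    _ ≤ M := hM t ht

lemma ckNormLe_deriv {α : ℝ → E} (hα : CkNormLe (k + 1) a b α K) :
    CkNormLe k a b (deriv α) K := fun j hj t ht => by
  simpa only [iteratedDeriv_succ'] using hα (j + 1) (by omega) t ht

lemma norm_le_mul_sub_of_norm_deriv_le {f : ℝ → E} (hf : Differentiable ℝ f) (ha : f a = 0)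
    (hK : ∀ t ∈ Icc a b, ‖deriv f t‖ ≤ K) : ∀ t ∈ Icc a b, ‖f t‖ ≤ K * (t - a) := by
  simpa [ha] using norm_image_sub_le_of_norm_deriv_le_segment'
    (fun x _ => (hf x).hasDerivAt.hasDerivWithinAt) (fun x hx => hK x (Ico_subset_Icc_self hx))

lemma ckNormLe_succ_of_deriv {f : ℝ → E} (hf : Differentiable ℝ f) (ha : f a = 0)
    (hK : CkNormLe k a b (deriv f) K) : CkNormLe (k + 1) a b f ((1 + (b - a)) * K) := by
  intro j hj t ht
  have hK0 : 0 ≤ K := (norm_nonneg _).trans (hK 0 k.zero_le t ht)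
  have hab : 0 ≤ b - a := by linarith [ht.1, ht.2]
  cases j with
  | zero =>
    have := norm_le_mul_sub_of_norm_deriv_le hf ha (fun s hs => by
      simpa using hK 0 k.zero_le s hs) t ht
    rw [iteratedDeriv_zero]
    nlinarith [ht.2]
  | succ j =>
    rw [iteratedDeriv_succ']
    nlinarith [hK j (by omega) t ht]

end Calculus

lemma exists_memCk0_intervalIntegral_eq_one {a b : ℝ} (hab : a < b) (k : ℕ) :
    ∃ φ : ℝ → ℝ, MemCk0 k a b φ ∧ ∫ s in a..b, φ s = 1 := by
  let bump : ContDiffBump ((a + b) / 2) := ⟨(b - a) / 8, (b - a) / 4, by linarith, by linarith⟩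
  have hsupp : tsupport (bump.normed volume) ⊆ Ioo a b := by
    rw [bump.tsupport_normed_eq, Real.closedBall_eq_Icc,
      show bump.rOut = (b - a) / 4 from rfl]
    exact Icc_subset_Ioo (by linarith) (by linarith)
  refine ⟨bump.normed volume, memCk0_of_tsupport_subset_Ioo bump.contDiff_normed hsupp, ?_⟩
  rw [integral_eq_integral_of_support_subset
    ((subset_tsupport _).trans (hsupp.trans Ioo_subset_Ioc_self)), bump.integral_normed]

section CorrectedPrimitive

variable {E : Type*} [NormedAddCommGroup E] [NormedSpace ℝ E]
  {a b : ℝ} {k : ℕ} {φ : ℝ → ℝ} {β : ℝ → E}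

noncomputable def correctedPrimitive (φ : ℝ → ℝ) (a b : ℝ) (β : ℝ → E) (t : ℝ) : E :=
  (∫ s in a..t, β s) - (∫ s in a..t, φ s) • ∫ s in a..b, β s

lemma correctedPrimitive_add {γ : ℝ → E} (hβ : Continuous β) (hγ : Continuous γ) :
    correctedPrimitive φ a b (β + γ) =
      correctedPrimitive φ a b β + correctedPrimitive φ a b γ := by
  funext t
  simp only [correctedPrimitive, Pi.add_apply,
    integral_add (hβ.intervalIntegrable _ _) (hγ.intervalIntegrable _ _), smul_add]
  abel

lemma correctedPrimitive_smul (c : ℝ) (β : ℝ → E) :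
    correctedPrimitive φ a b (c • β) = c • correctedPrimitive φ a b β := by
  funext t
  simp only [correctedPrimitive, Pi.smul_apply, intervalIntegral.integral_smul, smul_sub,
    smul_comm c]

variable [CompleteSpace E]

lemma hasDerivAt_correctedPrimitive (hβ : Continuous β) (hφ : Continuous φ) (t : ℝ) :
    HasDerivAt (correctedPrimitive φ a b β) (β t - φ t • ∫ s in a..b, β s) t :=
  (hβ.integral_hasStrictDerivAt a t).hasDerivAt.sub
    ((hφ.integral_hasStrictDerivAt a t).hasDerivAt.smul_const _)

lemma deriv_correctedPrimitive (hβ : Continuous β) (hφ : Continuous φ) :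
    deriv (correctedPrimitive φ a b β) = fun t => β t - φ t • ∫ s in a..b, β s :=
  funext fun t => (hasDerivAt_correctedPrimitive hβ hφ t).deriv

lemma contDiff_correctedPrimitive (hβ : ContDiff ℝ k β) (hφ : ContDiff ℝ k φ) :
    ContDiff ℝ (k + 1 : ℕ) (correctedPrimitive φ a b β) := by
  rw [Nat.cast_add_one, contDiff_succ_iff_deriv,
    deriv_correctedPrimitive hβ.continuous hφ.continuous]
  exact ⟨fun t => (hasDerivAt_correctedPrimitive hβ.continuous hφ.continuous t).differentiableAt,
    by simp, hβ.sub (hφ.smul contDiff_const)⟩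

lemma iteratedDeriv_succ_correctedPrimitive (hβ : ContDiff ℝ k β) (hφ : ContDiff ℝ k φ)
    {j : ℕ} (hj : j ≤ k) (t : ℝ) :
    iteratedDeriv (j + 1) (correctedPrimitive φ a b β) t =
      iteratedDeriv j β t - iteratedDeriv j φ t • ∫ s in a..b, β s := by
  have hjk : (j : WithTop ℕ∞) ≤ k := by exact_mod_cast hj
  have hφI : ContDiff ℝ j fun s => φ s • ∫ u in a..b, β u := (hφ.of_le hjk).smul contDiff_const
  rw [iteratedDeriv_succ', deriv_correctedPrimitive hβ.continuous hφ.continuous,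
    iteratedDeriv_fun_sub (hβ.of_le hjk).contDiffAt hφI.contDiffAt,
    iteratedDeriv_smul_const (hφ.of_le hjk).contDiffAt]

lemma memCk0_correctedPrimitive (hβ : MemCk0 k a b β) (hφ : MemCk0 k a b φ)
    (hφ_int : ∫ s in a..b, φ s = 1) : MemCk0 (k + 1) a b (correctedPrimitive φ a b β) := by
  refine ⟨contDiff_correctedPrimitive hβ.1 hφ.1, fun j hj => ?_⟩
  cases j with
  | zero => simp [correctedPrimitive, hφ_int]
  | succ j =>
    simp only [iteratedDeriv_succ_correctedPrimitive hβ.1 hφ.1 (by omega : j ≤ k),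
      (hβ.2 j (by omega)).1, (hβ.2 j (by omega)).2, (hφ.2 j (by omega)).1,
      (hφ.2 j (by omega)).2, zero_smul, sub_zero, and_self]

lemma ckNormLe_correctedPrimitive {M K : ℝ} (hβ : ContDiff ℝ k β) (hφ : ContDiff ℝ k φ)
    (hM : CkNormLe k a b φ M) (hK : CkNormLe k a b β K) :
    CkNormLe (k + 1) a b (correctedPrimitive φ a b β)
      ((1 + (b - a)) * (1 + M * (b - a)) * K) := by
  rw [mul_assoc]
  refine ckNormLe_succ_of_deriv ((contDiff_correctedPrimitive hβ hφ).differentiable (by simp)) ?_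
    fun j hj t ht => ?_
  · simp [correctedPrimitive]
  have hab : 0 ≤ b - a := by linarith [ht.1, ht.2]
  have hK0 : 0 ≤ K := (norm_nonneg _).trans (hK 0 k.zero_le t ht)
  have hM0 : 0 ≤ M := (norm_nonneg _).trans (hM 0 k.zero_le t ht)
  have hI : ‖∫ s in a..b, β s‖ ≤ K * (b - a) := by
    rw [← abs_of_nonneg hab]
    refine intervalIntegral.norm_integral_le_of_norm_le_const fun s hs => ?_
    rw [uIoc_of_le (by linarith)] at hs
    simpa using hK 0 k.zero_le s (Ioc_subset_Icc_self hs)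
  rw [← iteratedDeriv_succ', iteratedDeriv_succ_correctedPrimitive hβ hφ hj]
  calc _ ≤ ‖iteratedDeriv j β t‖ + ‖iteratedDeriv j φ t‖ * ‖∫ s in a..b, β s‖ :=
        (norm_sub_le _ _).trans_eq (by rw [norm_smul])
    _ ≤ K + M * (K * (b - a)) := by
        gcongr
        exacts [hK j hj t ht, hM j hj t ht]
    _ = _ := by ring

lemma correctedPrimitive_deriv {α : ℝ → E} (hα : MemCk0 (k + 1) a b α) :
    correctedPrimitive φ a b (deriv α) = α := by
  have hFTC : ∀ t, ∫ s in a..t, deriv α s = α t := fun t => by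
    rw [integral_deriv_eq_sub (fun x _ => hα.differentiable x)
      ((hα.1.continuous_deriv (by simp)).intervalIntegrable _ _), hα.apply_left, sub_zero]
  funext t
  simp [correctedPrimitive, hFTC, hα.apply_right]

end CorrectedPrimitive

section Dual

variable {V : Type*} [NormedAddCommGroup V] [NormedSpace ℝ V] {a b : ℝ} {k m : ℕ}
  {f : (ℝ → (V →L[ℝ] ℝ)) → ℝ}

lemma IsDk.neg (hf : IsDk k a b f) : IsDk k a b (-f) where
  map_add α β hα hβ := by simp only [Pi.neg_apply, hf.map_add α β hα hβ, neg_add]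
  map_smul c α hα := by simp only [Pi.neg_apply, hf.map_smul c α hα, mul_neg]
  bound := let ⟨C, hC⟩ := hf.bound; ⟨C, fun α K hα hK => by simpa using hC α K hα hK⟩

lemma IsDk.comp (hf : IsDk m a b f) {P : (ℝ → (V →L[ℝ] ℝ)) → ℝ → (V →L[ℝ] ℝ)} {c : ℝ}
    (hP : ∀ β, MemCk0 k a b β → MemCk0 m a b (P β))
    (hP_add : ∀ β γ, MemCk0 k a b β → MemCk0 k a b γ → P (β + γ) = P β + P γ)
    (hP_smul : ∀ (r : ℝ) β, MemCk0 k a b β → P (r • β) = r • P β)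
    (hP_bound : ∀ β K, MemCk0 k a b β → CkNormLe k a b β K → CkNormLe m a b (P β) (c * K)) :
    IsDk k a b (f ∘ P) where
  map_add β γ hβ hγ := by
    simp only [Function.comp_apply, hP_add β γ hβ hγ, hf.map_add _ _ (hP β hβ) (hP γ hγ)]
  map_smul r β hβ := by simp only [Function.comp_apply, hP_smul r β hβ, hf.map_smul r _ (hP β hβ)]
  bound := let ⟨C, hC⟩ := hf.bound
    ⟨C * c, fun β K hβ hK => by simpa [mul_assoc] using hC _ _ (hP β hβ) (hP_bound β K hβ hK)⟩

end Dual

theorem derivation_injective_closed_image_transpose_surjective_general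
    (V : Type*) [NormedAddCommGroup V] [NormedSpace ℝ V]
    (a b : ℝ) (hab : a < b) (k : ℕ) :
    (∀ α : ℝ → (V →L[ℝ] ℝ), MemCk0 (k + 1) a b α →
        (∀ t ∈ Set.Icc a b, deriv α t = 0) → ∀ t ∈ Set.Icc a b, α t = 0) ∧
      (∃ c : ℝ, ∀ (α : ℝ → (V →L[ℝ] ℝ)) (K : ℝ), MemCk0 (k + 1) a b α →
        CkNormLe (k + 1) a b α K → CkNormLe k a b (deriv α) (c * K)) ∧
      (∃ c : ℝ, 0 < c ∧ ∀ (α : ℝ → (V →L[ℝ] ℝ)) (K : ℝ), MemCk0 (k + 1) a b α →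
        CkNormLe k a b (deriv α) K → CkNormLe (k + 1) a b α (c * K)) ∧
      (∀ f : (ℝ → (V →L[ℝ] ℝ)) → ℝ, IsDk (k + 1) a b f →
        ∃ F : (ℝ → (V →L[ℝ] ℝ)) → ℝ, IsDk k a b F ∧
          ∀ α, MemCk0 (k + 1) a b α → F (deriv α) = - f α) := by
  refine ⟨fun α hα hd t ht => ?_, ⟨1, fun α K _ hK => by simpa using ckNormLe_deriv hK⟩,
    ⟨1 + (b - a), by linarith, fun α K hα hK =>
      ckNormLe_succ_of_deriv hα.differentiable hα.apply_left hK⟩, fun f hf => ?_⟩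
  · simpa using norm_le_mul_sub_of_norm_deriv_le (K := 0) hα.differentiable hα.apply_left
      (fun s hs => by simp [hd s hs]) t ht
  obtain ⟨φ, hφ, hφ_int⟩ := exists_memCk0_intervalIntegral_eq_one hab k
  obtain ⟨M, hM⟩ := exists_ckNormLe hφ.1 a b
  refine ⟨-(f ∘ correctedPrimitive φ a b), IsDk.neg (hf.comp
    (fun β hβ => memCk0_correctedPrimitive hβ hφ hφ_int)
    (fun β γ hβ hγ => correctedPrimitive_add hβ.1.continuous hγ.1.continuous)
    (fun r β _ => correctedPrimitive_smul r β)
    (fun β K hβ hK => ckNormLe_correctedPrimitive hβ.1 hφ.1 hM hK)), fun α hα => ?_⟩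
  simp [correctedPrimitive_deriv hα]

/-- the derivation map `d : C^{k+1}₀([a,b],V*) → C^k₀([a,b],V*)`,
`α ↦ α'`, is an injective bounded linear map with closed image (expressed by a two-sided
norm estimate); consequently its transpose `d* : D^k → D^{k+1}` is surjective, i.e. every
`f ∈ D^{k+1}([a,b],V)` admits a primitive `F ∈ D^k([a,b],V)` with `F' = f`
(`⟨F, α'⟩ = −⟨f, α⟩` for all `α ∈ C^{k+1}₀`). -/
theorem derivation_injective_closed_image_transpose_surjective
    (V : Type*) [NormedAddCommGroup V] [NormedSpace ℝ V] [FiniteDimensional ℝ V]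
    (a b : ℝ) (hab : a < b) (k : ℕ) (hk : 1 ≤ k) :
    (∀ α : ℝ → (V →L[ℝ] ℝ), MemCk0 (k + 1) a b α →
        (∀ t ∈ Set.Icc a b, deriv α t = 0) → ∀ t ∈ Set.Icc a b, α t = 0) ∧
      (∃ c : ℝ, ∀ (α : ℝ → (V →L[ℝ] ℝ)) (K : ℝ), MemCk0 (k + 1) a b α →
        CkNormLe (k + 1) a b α K → CkNormLe k a b (deriv α) (c * K)) ∧
      (∃ c : ℝ, 0 < c ∧ ∀ (α : ℝ → (V →L[ℝ] ℝ)) (K : ℝ), MemCk0 (k + 1) a b α →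
        CkNormLe k a b (deriv α) K → CkNormLe (k + 1) a b α (c * K)) ∧
      (∀ f : (ℝ → (V →L[ℝ] ℝ)) → ℝ, IsDk (k + 1) a b f →
        ∃ F : (ℝ → (V →L[ℝ] ℝ)) → ℝ, IsDk k a b F ∧
          ∀ α, MemCk0 (k + 1) a b α → F (deriv α) = - f α) :=
  derivation_injective_closed_image_transpose_surjective_general V a b hab k
end

section
/- Locality of regularity for generalized functions: let λ be a generalized function on [a,b] (an element of D^k([a,b],V)). Suppose that for every t ∈ [a,b] there exists ε > 0 such that the restriction of λ to [t−ε, t+ε] ∩ [a,b] is represented by a C^m function (m ≥ 0). Then λ is represented by a C^m function on [a,b]. -/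
/-!
Two local representatives agree where both are defined: pairing `λ` with `φ • ℓ` for bumps `φ`
inside the overlap, the fundamental lemma of the calculus of variations gives `ℓ ∘ g₁ = ℓ ∘ g₂`
for every functional `ℓ`. So the local representatives glue to a single `C^m` function `G`.
Finitely many of the intervals cover `[a,b]`; for a smooth partition of unity `fᵢ` subordinate
to them, `λ α = ∑ᵢ λ (fᵢ α) = ∑ᵢ ∫ fᵢ α(G) = ∫ α(G)`.
-/

open MeasureTheory

open Set Filter Topology Manifold

section TestFunctions

variable {k : ℕ} {a b : ℝ} {E : Type*} [NormedAddCommGroup E] [NormedSpace ℝ E] {α β : ℝ → E}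

lemma iteratedDeriv_eq_zero_of_eventuallyEq_zero {f : ℝ → E} {x : ℝ} (h : f =ᶠ[𝓝 x] 0)
    (j : ℕ) : iteratedDeriv j f x = 0 := by
  rw [h.iteratedDeriv_eq j, iteratedDeriv_const_zero]

/-- Leibniz: each term of the expansion of `(u • w)⁽ʲ⁾ x` contains a vanishing `w⁽ⁱ⁾ x`. -/
lemma iteratedDeriv_smul_eq_zero {n j : ℕ} {u : ℝ → ℝ} {w : ℝ → E} {x : ℝ}
    (hu : ContDiff ℝ n u) (hw : ContDiff ℝ n w) (hwx : ∀ i ≤ n, iteratedDeriv i w x = 0)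
    (hj : j ≤ n) : iteratedDeriv j (fun s => u s • w s) x = 0 := by
  rw [← norm_le_zero_iff, ← norm_iteratedFDeriv_eq_norm_iteratedDeriv]
  refine (norm_iteratedFDeriv_smul_le hu hw x (by exact_mod_cast hj)).trans
    (Finset.sum_eq_zero fun i hi => ?_).le
  rw [norm_iteratedFDeriv_eq_norm_iteratedDeriv (f := w), hwx (j - i) (by omega), norm_zero,
    mul_zero]

lemma MemCk0.zero : MemCk0 k a b (0 : ℝ → E) :=
  ⟨contDiff_const, fun _ _ => ⟨iteratedDeriv_const_zero, iteratedDeriv_const_zero⟩⟩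

lemma MemCk0.add (hα : MemCk0 k a b α) (hβ : MemCk0 k a b β) : MemCk0 k a b (α + β) := by
  refine ⟨hα.1.add hβ.1, fun j hj => ?_⟩
  have hα' : ContDiff ℝ j α := hα.1.of_le (by exact_mod_cast hj)
  have hβ' : ContDiff ℝ j β := hβ.1.of_le (by exact_mod_cast hj)
  simp only [iteratedDeriv_add hα'.contDiffAt hβ'.contDiffAt, (hα.2 j hj).1, (hα.2 j hj).2,
    (hβ.2 j hj).1, (hβ.2 j hj).2, add_zero, and_self]

lemma MemCk0.sub (hα : MemCk0 k a b α) (hβ : MemCk0 k a b β) : MemCk0 k a b (α - β) := by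
  refine ⟨hα.1.sub hβ.1, fun j hj => ?_⟩
  have hα' : ContDiff ℝ j α := hα.1.of_le (by exact_mod_cast hj)
  have hβ' : ContDiff ℝ j β := hβ.1.of_le (by exact_mod_cast hj)
  simp only [iteratedDeriv_sub hα'.contDiffAt hβ'.contDiffAt, (hα.2 j hj).1, (hα.2 j hj).2,
    (hβ.2 j hj).1, (hβ.2 j hj).2, sub_zero, and_self]

lemma MemCk0.sum {ι : Type*} (s : Finset ι) {F : ι → ℝ → E} (hF : ∀ i ∈ s, MemCk0 k a b (F i)) :
    MemCk0 k a b (∑ i ∈ s, F i) := by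
  classical
  induction s using Finset.induction with
  | empty => exact MemCk0.zero
  | insert i s hi ih =>
    rw [Finset.sum_insert hi]
    exact (hF i (s.mem_insert_self i)).add (ih fun j hj => hF j (Finset.mem_insert_of_mem hj))

lemma MemCk0.smul_left {u : ℝ → ℝ} (hu : ContDiff ℝ k u) (hα : MemCk0 k a b α) :
    MemCk0 k a b (fun s => u s • α s) :=
  ⟨hu.smul hα.1, fun _ hj => ⟨iteratedDeriv_smul_eq_zero hu hα.1 (fun i hi => (hα.2 i hi).1) hj,
    iteratedDeriv_smul_eq_zero hu hα.1 (fun i hi => (hα.2 i hi).2) hj⟩⟩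

lemma memCk0_of_notMem_tsupport (hα : ContDiff ℝ k α) (ha : a ∉ tsupport α)
    (hb : b ∉ tsupport α) : MemCk0 k a b α :=
  ⟨hα, fun j _ => ⟨iteratedDeriv_eq_zero_of_eventuallyEq_zero
    (notMem_tsupport_iff_eventuallyEq.1 ha) j,
    iteratedDeriv_eq_zero_of_eventuallyEq_zero (notMem_tsupport_iff_eventuallyEq.1 hb) j⟩⟩

end TestFunctions

namespace IsDk

variable {k : ℕ} {a b : ℝ} {V : Type*} [NormedAddCommGroup V] [NormedSpace ℝ V]
  {lam : (ℝ → (V →L[ℝ] ℝ)) → ℝ} {α β : ℝ → (V →L[ℝ] ℝ)}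

lemma map_zero (hlam : IsDk k a b lam) : lam 0 = 0 := by
  simpa using hlam.map_smul 0 0 MemCk0.zero

lemma map_sub (hlam : IsDk k a b lam) (hα : MemCk0 k a b α) (hβ : MemCk0 k a b β) :
    lam (α - β) = lam α - lam β := by
  rw [eq_sub_iff_add_eq, ← hlam.map_add _ _ (hα.sub hβ) hβ, sub_add_cancel]

lemma map_sum (hlam : IsDk k a b lam) {ι : Type*} (s : Finset ι) {F : ι → ℝ → (V →L[ℝ] ℝ)}
    (hF : ∀ i ∈ s, MemCk0 k a b (F i)) : lam (∑ i ∈ s, F i) = ∑ i ∈ s, lam (F i) := by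
  classical
  induction s using Finset.induction with
  | empty => simpa using hlam.map_zero
  | insert i s hi ih =>
    have hF' : ∀ j ∈ s, MemCk0 k a b (F j) := fun j hj => hF j (Finset.mem_insert_of_mem hj)
    rw [Finset.sum_insert hi, Finset.sum_insert hi,
      hlam.map_add _ _ (hF i (s.mem_insert_self i)) (MemCk0.sum s hF'), ih hF']

/-- `β` has zero `C^k` norm on `[a,b]`: inside, it vanishes near each point, and at `a`, `b`
its derivatives vanish because `β ∈ C^k₀`. -/
lemma map_eq_zero_of_eqOn (hlam : IsDk k a b lam) (hβ : MemCk0 k a b β)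
    (hβ0 : EqOn β 0 (Ioo a b)) : lam β = 0 := by
  obtain ⟨C, hC⟩ := hlam.bound
  have hnorm : CkNormLe k a b β 0 := by
    intro j hj t ht
    rcases eq_endpoints_or_mem_Ioo_of_mem_Icc ht with rfl | rfl | ht
    · rw [(hβ.2 j hj).1, norm_zero]
    · rw [(hβ.2 j hj).2, norm_zero]
    · rw [iteratedDeriv_eq_zero_of_eventuallyEq_zero
        (eventually_of_mem (isOpen_Ioo.mem_nhds ht) hβ0) j, norm_zero]
  simpa using hC β 0 hβ hnorm

lemma map_eq_of_eqOn (hlam : IsDk k a b lam) (hα : MemCk0 k a b α) (hβ : MemCk0 k a b β)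
    (h : EqOn α β (Ioo a b)) : lam α = lam β := by
  rw [← sub_eq_zero, ← hlam.map_sub hα hβ]
  exact hlam.map_eq_zero_of_eqOn (hα.sub hβ) fun s hs => sub_eq_zero.2 (h hs)

end IsDk

lemma integrable_mul_of_tsupport_subset {X : Type*} [TopologicalSpace X] [MeasurableSpace X]
    [OpensMeasurableSpace X] {μ : Measure X} [IsFiniteMeasureOnCompacts μ] {φ f : X → ℝ}
    {W : Set X} (hW : IsOpen W) (hφ : Continuous φ) (hφc : HasCompactSupport φ)
    (hφW : tsupport φ ⊆ W) (hf : ContinuousOn f W) : Integrable (fun x => φ x * f x) μ :=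
  ((hφ.continuousOn.mul hf).continuous_of_tsupport_subset hW
    (tsupport_mul_subset_left.trans hφW)).integrable_of_hasCompactSupport hφc.mul_right

/-- `g` represents the restriction of `lam` to `S`: on test functions vanishing off `S`, `lam` is
integration against `g` over `[a,b]`. -/
def RepresentsOn (k : ℕ) (a b : ℝ) {V : Type*} [NormedAddCommGroup V] [NormedSpace ℝ V]
    (lam : (ℝ → (V →L[ℝ] ℝ)) → ℝ) (S : Set ℝ) (g : ℝ → V) : Prop :=
  ∀ α, MemCk0 k a b α → (∀ s, s ∉ S → α s = 0) → lam α = ∫ s in a..b, α s (g s)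

namespace RepresentsOn

variable {k : ℕ} {a b : ℝ} {V : Type*} [NormedAddCommGroup V] [NormedSpace ℝ V]
  {lam : (ℝ → (V →L[ℝ] ℝ)) → ℝ} {S T : Set ℝ} {g g₁ g₂ : ℝ → V}

lemma mono (hg : RepresentsOn k a b lam S g) (hTS : T ⊆ S) : RepresentsOn k a b lam T g :=
  fun α hα hαT => hg α hα fun s hs => hαT s fun hsT => hs (hTS hsT)

lemma congr (hg : RepresentsOn k a b lam S g) (hab : a ≤ b) (h : EqOn g g₁ (S ∩ Icc a b)) :
    RepresentsOn k a b lam S g₁ := by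
  intro α hα hαS
  rw [hg α hα hαS]
  refine intervalIntegral.integral_congr fun s hs => ?_
  rw [uIcc_of_le hab] at hs
  by_cases hsS : s ∈ S
  · rw [h ⟨hsS, hs⟩]
  · simp [hαS s hsS]

lemma map_smul_const_eq_integral (hg : RepresentsOn k a b lam S g) (hSab : S ⊆ Ioo a b)
    {φ : ℝ → ℝ} (hφ : ContDiff ℝ k φ) (hφS : tsupport φ ⊆ S) (ℓ : V →L[ℝ] ℝ) :
    lam (fun s => φ s • ℓ) = ∫ s, φ s * ℓ (g s) := by
  have hφ0 : ∀ s ∉ S, φ s = 0 := fun s hs => image_eq_zero_of_notMem_tsupport fun h => hs (hφS h)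
  have hα : MemCk0 k a b (fun s => φ s • ℓ) :=
    memCk0_of_notMem_tsupport (hφ.smul contDiff_const)
      (fun h => (hSab (hφS (tsupport_smul_subset_left _ _ h))).1.false)
      (fun h => (hSab (hφS (tsupport_smul_subset_left _ _ h))).2.false)
  rw [hg _ hα fun s hs => by simp [hφ0 s hs]]
  refine intervalIntegral.integral_eq_integral_of_support_subset fun s hs => ?_
  by_contra hsab
  exact hs (by simp [hφ0 s fun h => hsab (Ioo_subset_Ioc_self (hSab h))])

lemma eqOn_of_isOpen (hS : IsOpen S) (hSab : S ⊆ Ioo a b) (h₁ : RepresentsOn k a b lam S g₁)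
    (h₂ : RepresentsOn k a b lam S g₂) (hg₁ : ContinuousOn g₁ S) (hg₂ : ContinuousOn g₂ S) :
    EqOn g₁ g₂ S := by
  intro x hx
  refine (SeparatingDual.eq_iff_forall_dual_eq (R := ℝ)).2 fun ℓ => ?_
  have hℓg₁ : ContinuousOn (fun y => ℓ (g₁ y)) S := ℓ.continuous.comp_continuousOn hg₁
  have hℓg₂ : ContinuousOn (fun y => ℓ (g₂ y)) S := ℓ.continuous.comp_continuousOn hg₂
  have hc : ContinuousOn (fun y => ℓ (g₁ y) - ℓ (g₂ y)) S := hℓg₁.sub hℓg₂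
  have hae := hS.ae_eq_zero_of_integral_contDiff_smul_eq_zero (μ := volume)
    (hc.locallyIntegrableOn hS.measurableSet) fun φ hφ hφc hφS => by
      have hφk : ContDiff ℝ k φ := hφ.of_le (by exact_mod_cast le_top)
      simp only [smul_eq_mul, mul_sub]
      rw [integral_sub (integrable_mul_of_tsupport_subset hS hφ.continuous hφc hφS hℓg₁)
        (integrable_mul_of_tsupport_subset hS hφ.continuous hφc hφS hℓg₂),
        ← h₁.map_smul_const_eq_integral hSab hφk hφS, ← h₂.map_smul_const_eq_integral hSab hφk hφS,
        sub_self]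
  exact sub_eq_zero.1 (Measure.eqOn_open_of_ae_eq (g := 0)
    ((ae_restrict_iff' hS.measurableSet).2 hae) hS hc continuousOn_const hx)

lemma eqOn (hab : a < b) (hS : IsOpen S) (h₁ : RepresentsOn k a b lam S g₁)
    (h₂ : RepresentsOn k a b lam S g₂) (hg₁ : ContinuousOn g₁ (S ∩ Icc a b))
    (hg₂ : ContinuousOn g₂ (S ∩ Icc a b)) : EqOn g₁ g₂ (S ∩ Icc a b) := by
  have hsub : S ∩ Ioo a b ⊆ S ∩ Icc a b := inter_subset_inter_right _ Ioo_subset_Icc_self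
  refine EqOn.of_subset_closure ?_ hg₁ hg₂ hsub fun x hx => hS.inter_closure ⟨hx.1, ?_⟩
  · exact eqOn_of_isOpen (hS.inter isOpen_Ioo) inter_subset_right (h₁.mono inter_subset_left)
      (h₂.mono inter_subset_left) (hg₁.mono hsub) (hg₂.mono hsub)
  · rw [closure_Ioo hab.ne]
    exact hx.2

end RepresentsOn

theorem IsDk.map_eq_integral_of_cover {k : ℕ} {a b : ℝ} {V : Type*} [NormedAddCommGroup V]
    [NormedSpace ℝ V] {lam : (ℝ → (V →L[ℝ] ℝ)) → ℝ} (hlam : IsDk k a b lam) (hab : a ≤ b)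
    {ι : Type*} [Fintype ι] {U : ι → Set ℝ} (hU : ∀ i, IsOpen (U i))
    (hcover : Icc a b ⊆ ⋃ i, U i) {G : ℝ → V} (hG : ContinuousOn G (Icc a b))
    (hrep : ∀ i, RepresentsOn k a b lam (U i) G) {α : ℝ → (V →L[ℝ] ℝ)} (hα : MemCk0 k a b α) :
    lam α = ∫ s in a..b, α s (G s) := by
  obtain ⟨f, hf⟩ := SmoothPartitionOfUnity.exists_isSubordinate 𝓘(ℝ, ℝ) isClosed_Icc U hU hcover
  have hfα : ∀ i, MemCk0 k a b (fun s => f i s • α s) := fun i =>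
    hα.smul_left ((contMDiff_iff_contDiff.1 (f i).contMDiff).of_le (by exact_mod_cast le_top))
  have hsum : ∀ s ∈ Icc a b, ∑ i, f i s = 1 := fun s hs => by
    simpa [finsum_eq_sum_of_fintype] using f.sum_eq_one hs
  have hsplit : EqOn α (∑ i, fun s => f i s • α s) (Ioo a b) := fun s hs => by
    simp [← Finset.sum_smul, hsum s (Ioo_subset_Icc_self hs)]
  have hint : ∀ i, IntervalIntegrable (fun s => f i s • α s (G s)) volume a b := fun i =>
    ((f i).contMDiff.continuous.continuousOn.smul (hα.1.continuous.continuousOn.clm_apply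
      (by rwa [uIcc_of_le hab]))).intervalIntegrable
  calc lam α = lam (∑ i, fun s => f i s • α s) :=
        hlam.map_eq_of_eqOn hα (MemCk0.sum _ fun i _ => hfα i) hsplit
    _ = ∑ i, ∫ s in a..b, f i s • α s (G s) := by
        rw [hlam.map_sum _ fun i _ => hfα i]
        refine Finset.sum_congr rfl fun i _ => hrep i _ (hfα i) fun s hs => ?_
        simp [image_eq_zero_of_notMem_tsupport fun h => hs (hf i h)]
    _ = ∫ s in a..b, α s (G s) := by
        rw [← intervalIntegral.integral_finsetSum fun i _ => hint i]
        refine intervalIntegral.integral_congr fun s hs => ?_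
        rw [← Finset.sum_smul, hsum s (by rwa [uIcc_of_le hab] at hs), one_smul]

lemma exists_eqOn_of_pairwise_eqOn {ι X Y : Type*} [Nonempty Y] {s : Set X} {U : ι → Set X}
    {g : ι → X → Y} (h : ∀ i j, EqOn (g i) (g j) (U i ∩ U j ∩ s)) :
    ∃ G : X → Y, ∀ i, EqOn G (g i) (U i ∩ s) := by
  classical
  refine ⟨fun x => if hx : ∃ i, x ∈ U i then g hx.choose x else Classical.arbitrary Y,
    fun i x hx => ?_⟩
  have hx' : ∃ j, x ∈ U j := ⟨i, hx.1⟩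
  simp only [dif_pos hx']
  exact h _ i ⟨⟨hx'.choose_spec, hx.1⟩, hx.2⟩

theorem generalized_function_regularity_is_local_general
    (V : Type*) [NormedAddCommGroup V] [NormedSpace ℝ V]
    (a b : ℝ) (hab : a < b) (k m : ℕ)
    (lam : (ℝ → (V →L[ℝ] ℝ)) → ℝ) (hlam : IsDk k a b lam)
    (hloc : ∀ t ∈ Set.Icc a b, ∃ ε > 0, ∃ g : ℝ → V,
      ContDiffOn ℝ m g (Set.Icc (t - ε) (t + ε) ∩ Set.Icc a b) ∧
      ∀ α, MemCk0 k a b α → (∀ s, s ∉ Set.Icc (t - ε) (t + ε) → α s = 0) →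
        lam α = ∫ s in a..b, α s (g s)) :
    ∃ g : ℝ → V, ContDiffOn ℝ m g (Set.Icc a b) ∧
      ∀ α, MemCk0 k a b α → lam α = ∫ s in a..b, α s (g s) := by
  choose! ε hε g hg hrep using hloc
  set U : ℝ → Set ℝ := fun t => Ioo (t - ε t) (t + ε t)
  obtain ⟨T, hTab, hTcover⟩ := isCompact_Icc.elim_nhds_subcover U fun t ht =>
    Ioo_mem_nhds (by linarith [hε t ht]) (by linarith [hε t ht])
  have hUg (t : T) : RepresentsOn k a b lam (U t) (g t) ∧ ContDiffOn ℝ m (g t) (U t ∩ Icc a b) :=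
    ⟨RepresentsOn.mono (hrep t (hTab t t.2)) Ioo_subset_Icc_self,
      (hg t (hTab t t.2)).mono (inter_subset_inter_left _ Ioo_subset_Icc_self)⟩
  obtain ⟨G, hG⟩ := exists_eqOn_of_pairwise_eqOn (s := Icc a b) (U := fun t : T => U t)
    (g := fun t : T => g t) fun i j => RepresentsOn.eqOn hab (isOpen_Ioo.inter isOpen_Ioo)
      ((hUg i).1.mono inter_subset_left) ((hUg j).1.mono inter_subset_right)
      ((hUg i).2.continuousOn.mono (inter_subset_inter_left _ inter_subset_left))
      ((hUg j).2.continuousOn.mono (inter_subset_inter_left _ inter_subset_right))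
  have hGm : ContDiffOn ℝ m G (Icc a b) := contDiffOn_of_locally_contDiffOn fun x hx => by
    obtain ⟨t, ht, hxt⟩ := mem_iUnion₂.1 (hTcover hx)
    refine ⟨U t, isOpen_Ioo, hxt, ?_⟩
    rw [inter_comm]
    exact (hUg ⟨t, ht⟩).2.congr fun y hy => hG ⟨t, ht⟩ hy
  refine ⟨G, hGm, fun α hα => hlam.map_eq_integral_of_cover hab.le (U := fun t : T => U t)
    (fun _ => isOpen_Ioo) ?_ hGm.continuousOn
    (fun t => (hUg t).1.congr hab.le fun y hy => (hG t hy).symm) hα⟩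
  intro x hx
  obtain ⟨t, ht, hxt⟩ := mem_iUnion₂.1 (hTcover hx)
  exact mem_iUnion.2 ⟨⟨t, ht⟩, hxt⟩

/-- locality of regularity: let `λ ∈ D^k([a,b],V)`. If every `t ∈ [a,b]`
has `ε > 0` such that the restriction of `λ` to `[t−ε,t+ε] ∩ [a,b]` is represented by a
`C^m` function (i.e. `λ` agrees with integration against a `C^m` function on all test
functions supported in `[t−ε,t+ε]`), then `λ` is represented by a `C^m` function on
`[a,b]`. -/
theorem generalized_function_regularity_is_local
    (V : Type*) [NormedAddCommGroup V] [NormedSpace ℝ V] [FiniteDimensional ℝ V]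
    (a b : ℝ) (hab : a < b) (k m : ℕ)
    (lam : (ℝ → (V →L[ℝ] ℝ)) → ℝ) (hlam : IsDk k a b lam)
    (hloc : ∀ t ∈ Set.Icc a b, ∃ ε > 0, ∃ g : ℝ → V,
      ContDiffOn ℝ m g (Set.Icc (t - ε) (t + ε) ∩ Set.Icc a b) ∧
      ∀ α, MemCk0 k a b α → (∀ s, s ∉ Set.Icc (t - ε) (t + ε) → α s = 0) →
        lam α = ∫ s in a..b, α s (g s)) :
    ∃ g : ℝ → V, ContDiffOn ℝ m g (Set.Icc a b) ∧
      ∀ α, MemCk0 k a b α → lam α = ∫ s in a..b, α s (g s) :=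
  generalized_function_regularity_is_local_general V a b hab k m lam hlam hloc
end

section
/- Let V be a finite-dimensional real vector space. If a continuous linear functional λ on C⁰([a,b],V*) vanishes identically on the subspace C⁰₀([a,b],V*) of functions vanishing at the endpoints, then there exist σ_a, σ_b ∈ V such that λ = δ_a^{σ_a} + δ_b^{σ_b}, where δ_t^σ(α) = α(t)(σ). -/
/-!
Subtracting from `α` the affine interpolation of its endpoint values leaves a function in
`C⁰₀`, so `λ α` depends only, and linearly, on `(α a, α b)`; this gives two linear functionals
on `V*`, and in finite dimension each is evaluation at a vector of `V`.
-/

section AffineInterpolation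

variable {W : Type*} [AddCommGroup W] [Module ℝ W] [TopologicalSpace W]
  [IsTopologicalAddGroup W] [ContinuousSMul ℝ W]

noncomputable def affineInterpolation (a b : ℝ) : W × W →ₗ[ℝ] C(ℝ, W) where
  toFun p := ⟨fun t => ((b - t) / (b - a)) • p.1 + ((t - a) / (b - a)) • p.2, by fun_prop⟩
  map_add' p q := by ext t; simp only [ContinuousMap.coe_mk, ContinuousMap.add_apply,
    Prod.fst_add, Prod.snd_add]; module
  map_smul' c p := by ext t; simp only [ContinuousMap.coe_mk, ContinuousMap.smul_apply,
    Prod.smul_fst, Prod.smul_snd, RingHom.id_apply]; module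

variable {a b : ℝ}

theorem affineInterpolation_apply_left (hab : a ≠ b) (p : W × W) :
    affineInterpolation a b p a = p.1 := by
  simp [affineInterpolation, div_self (sub_ne_zero.2 hab.symm)]

theorem affineInterpolation_apply_right (hab : a ≠ b) (p : W × W) :
    affineInterpolation a b p b = p.2 := by
  simp [affineInterpolation, div_self (sub_ne_zero.2 hab.symm)]

theorem LinearMap.exists_eq_add_of_vanishing_at_endpoints (hab : a ≠ b)
    (L : C(ℝ, W) →ₗ[ℝ] ℝ) (hL : ∀ α : C(ℝ, W), α a = 0 → α b = 0 → L α = 0) :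
    ∃ F G : W →ₗ[ℝ] ℝ, ∀ α : C(ℝ, W), L α = F (α a) + G (α b) := by
  let P := L ∘ₗ affineInterpolation a b
  refine ⟨P ∘ₗ LinearMap.inl ℝ W W, P ∘ₗ LinearMap.inr ℝ W W, fun α => ?_⟩
  have h_rest : L (α - affineInterpolation a b (α a, α b)) = 0 :=
    hL _ (by simp [affineInterpolation_apply_left hab])
      (by simp [affineInterpolation_apply_right hab])
  calc L α = L (α - affineInterpolation a b (α a, α b)) + P (α a, α b) := by
        simp [P]
    _ = P (α a, 0) + P (0, α b) := by
        rw [h_rest, zero_add, ← map_add, Prod.mk_add_mk, add_zero, zero_add]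

end AffineInterpolation

theorem exists_eq_apply_of_finiteDimensional {𝕜 V : Type*} [NontriviallyNormedField 𝕜]
    [CompleteSpace 𝕜] [NormedAddCommGroup V] [NormedSpace 𝕜 V] [FiniteDimensional 𝕜 V]
    (F : (V →L[𝕜] 𝕜) →ₗ[𝕜] 𝕜) : ∃ σ : V, ∀ φ : V →L[𝕜] 𝕜, F φ = φ σ := by
  let F' : Module.Dual 𝕜 (Module.Dual 𝕜 V) :=
    F ∘ₗ (LinearMap.toContinuousLinearMap : Module.Dual 𝕜 V ≃ₗ[𝕜] V →L[𝕜] 𝕜).toLinearMap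
  exact ⟨(Module.evalEquiv 𝕜 V).symm F', fun φ =>
    (Module.apply_evalEquiv_symm_apply 𝕜 V (φ : Module.Dual 𝕜 V) F').symm⟩

theorem functional_vanishing_on_C00_is_dirac_general
    (V : Type*) [NormedAddCommGroup V] [NormedSpace ℝ V] [FiniteDimensional ℝ V]
    (a b : ℝ) (hab : a < b)
    (lam : (ℝ → (V →L[ℝ] ℝ)) → ℝ)
    (hadd : ∀ α β : ℝ → (V →L[ℝ] ℝ), Continuous α → Continuous β →
      lam (α + β) = lam α + lam β)
    (hsmul : ∀ (c : ℝ) (α : ℝ → (V →L[ℝ] ℝ)), Continuous α → lam (c • α) = c * lam α)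
    (hvan : ∀ α : ℝ → (V →L[ℝ] ℝ), Continuous α → α a = 0 → α b = 0 → lam α = 0) :
    ∃ σa σb : V, ∀ α : ℝ → (V →L[ℝ] ℝ), Continuous α →
      lam α = α a σa + α b σb := by
  let L : C(ℝ, V →L[ℝ] ℝ) →ₗ[ℝ] ℝ :=
    { toFun α := lam α
      map_add' α β := hadd α β α.continuous β.continuous
      map_smul' c α := hsmul c α α.continuous }
  obtain ⟨F, G, hL⟩ := L.exists_eq_add_of_vanishing_at_endpoints hab.ne
    fun α => hvan α α.continuous
  obtain ⟨σa, hσa⟩ := exists_eq_apply_of_finiteDimensional F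
  obtain ⟨σb, hσb⟩ := exists_eq_apply_of_finiteDimensional G
  exact ⟨σa, σb, fun α hα => by rw [← hσa, ← hσb]; exact hL ⟨α, hα⟩⟩

/-- if a continuous linear functional `λ` on `C⁰([a,b],V*)` vanishes on
the subspace `C⁰₀([a,b],V*)` of functions vanishing at the endpoints, then
`λ = δ_a^{σ_a} + δ_b^{σ_b}` for some `σ_a, σ_b ∈ V`, where `δ_t^σ(α) = α(t)(σ)`. -/
theorem functional_vanishing_on_C00_is_dirac
    (V : Type*) [NormedAddCommGroup V] [NormedSpace ℝ V] [FiniteDimensional ℝ V]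
    (a b : ℝ) (hab : a < b)
    (lam : (ℝ → (V →L[ℝ] ℝ)) → ℝ)
    (hadd : ∀ α β : ℝ → (V →L[ℝ] ℝ), Continuous α → Continuous β →
      lam (α + β) = lam α + lam β)
    (hsmul : ∀ (c : ℝ) (α : ℝ → (V →L[ℝ] ℝ)), Continuous α → lam (c • α) = c * lam α)
    (hbound : ∃ C : ℝ, ∀ (α : ℝ → (V →L[ℝ] ℝ)) (K : ℝ), Continuous α →
      (∀ t ∈ Set.Icc a b, ‖α t‖ ≤ K) → |lam α| ≤ C * K)
    (hvan : ∀ α : ℝ → (V →L[ℝ] ℝ), Continuous α → α a = 0 → α b = 0 → lam α = 0) :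
    ∃ σa σb : V, ∀ α : ℝ → (V →L[ℝ] ℝ), Continuous α →
      lam α = α a σa + α b σb :=
  functional_vanishing_on_C00_is_dirac_general V a b hab lam hadd hsmul hvan
end

section
/- Gronwall-type regularity via bootstrap: let λ₀ ∈ D⁰([c,d],(ℝᵐ)*) be a generalized function, h₁ : [c,d] → Lin(ℝᵐ,ℝᵐ) and h₂ : [c,d] → (ℝᵐ)* continuous, and suppose the generalized derivative satisfies λ₀' = λ₀ h₁ + h₂ (product in the generalized function sense). Then λ₀ is represented by a C¹ function. -/
open MeasureTheory Set

section Pre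
lemma continuous_primitive_of_continuous {E : Type*} [NormedAddCommGroup E] [NormedSpace ℝ E]
    [CompleteSpace E] {g : ℝ → E} (hg : Continuous g) (c : ℝ) :
    Continuous fun u => ∫ s in c..u, g s := by
  refine continuous_iff_continuousAt.2 fun x => ?_
  exact (intervalIntegral.integral_hasDerivAt_right (hg.intervalIntegrable _ _)
    (hg.stronglyMeasurable.stronglyMeasurableAtFilter) hg.continuousAt).continuousAt

lemma ode_exists {E : Type*} [NormedAddCommGroup E] [NormedSpace ℝ E] [CompleteSpace E]
    (c d : ℝ) (hcd : c ≤ d) (G : ℝ → E →L[ℝ] E) (hG : Continuous G)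
    (M : ℝ) (hM : ∀ t, ‖G t‖ ≤ M) (x₀ : E) :
    ∃ X X' : ℝ → E, Continuous X ∧ Continuous X' ∧ (∀ t, HasDerivAt X (X' t) t) ∧
      X c = x₀ ∧ ∀ t ∈ Set.Icc c d, X' t = G t (X t) := by
  have hM0 : 0 ≤ M := le_trans (norm_nonneg _) (hM c)
  set p : ℝ → ℝ := fun t => max c (min t d) with hp_def
  have hp_cont : Continuous p := continuous_const.max (continuous_id.min continuous_const)
  have hp_mem : ∀ t, p t ∈ Icc c d := fun t =>
    ⟨le_max_left _ _, max_le hcd (min_le_right _ _)⟩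
  have hp_id : ∀ t ∈ Icc c d, p t = t := fun t ht => by
    simp [hp_def, min_eq_left ht.2, max_eq_right ht.1]
  -- Picard iterates
  obtain ⟨A, hA0, hAs⟩ : ∃ A : ℕ → ℝ → E, (∀ t, A 0 t = x₀) ∧
      (∀ n t, A (n + 1) t = ∫ s in c..(p t), G s (A n s)) :=
    ⟨fun n => Nat.rec (motive := fun _ => ℝ → E) (fun _ => x₀)
      (fun _ An t => ∫ s in c..(p t), G s (An s)) n,
      fun _ => rfl, fun _ _ => rfl⟩
  have contA : ∀ n, Continuous (A n) := by
    intro n; induction n with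
    | zero => exact continuous_const.congr fun t => (hA0 t).symm
    | succ n ih =>
      have h : Continuous fun u => ∫ s in c..u, G s (A n s) :=
        continuous_primitive_of_continuous (hG.clm_apply ih) c
      have := h.comp hp_cont
      change Continuous (fun t => ∫ s in c..(p t), G s (A n s)) at this
      exact this.congr fun t => (hAs n t).symm
  -- factorial bound
  have bound : ∀ n t, ‖A n t‖ ≤ ‖x₀‖ * (M ^ n * (p t - c) ^ n / n.factorial) := by
    intro n; induction n with
    | zero => intro t; simp [hA0]
    | succ n ih =>
      intro t
      have hc_le : c ≤ p t := (hp_mem t).1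
      have hle : ∀ s ∈ Set.Icc c (p t), ‖G s (A n s)‖ ≤
          M * (‖x₀‖ * (M ^ n * (s - c) ^ n / n.factorial)) := by
        intro s hs
        have hps : p s = s := hp_id s ⟨hs.1, le_trans hs.2 (hp_mem t).2⟩
        have h1 : ‖G s (A n s)‖ ≤ ‖G s‖ * ‖A n s‖ := (G s).le_opNorm _
        have h2 := ih s
        rw [hps] at h2
        calc ‖G s (A n s)‖ ≤ ‖G s‖ * ‖A n s‖ := h1
          _ ≤ M * (‖x₀‖ * (M ^ n * (s - c) ^ n / n.factorial)) := by
              apply mul_le_mul (hM s) h2 (norm_nonneg _) hM0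
      have hbint : IntervalIntegrable
          (fun s => M * (‖x₀‖ * (M ^ n * (s - c) ^ n / n.factorial))) volume c (p t) := by
        apply Continuous.intervalIntegrable; continuity
      have := intervalIntegral.norm_integral_le_abs_of_norm_le (μ := volume)
          (f := fun s => G s (A n s))
          (g := fun s => M * (‖x₀‖ * (M ^ n * (s - c) ^ n / n.factorial))) ?_ hbint
      · rw [hAs]
        refine le_trans this ?_
        have hint : (∫ s in c..(p t), M * (‖x₀‖ * (M ^ n * (s - c) ^ n / n.factorial)))
            = M * (‖x₀‖ * (M ^ n * ((∫ s in c..(p t), (s - c) ^ n)) / n.factorial)) := by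
          rw [intervalIntegral.integral_const_mul, intervalIntegral.integral_const_mul]
          rw [intervalIntegral.integral_div, intervalIntegral.integral_const_mul]
        have hpow : (∫ s in c..(p t), (s - c) ^ n) = (p t - c) ^ (n + 1) / (n + 1) := by
          rw [intervalIntegral.integral_comp_sub_right (fun x => x ^ n) c,
            integral_pow, sub_self, zero_pow (Nat.succ_ne_zero n), sub_zero]
        rw [hint, hpow]
        have h0 : (0:ℝ) ≤ p t - c := sub_nonneg.2 hc_le
        rw [abs_of_nonneg (by positivity)]
        apply le_of_eq
        rw [Nat.factorial_succ]
        push_cast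
        field_simp
        ring
      · refine (ae_restrict_iff' measurableSet_uIoc).2 ?_
        filter_upwards with s hs
        rw [Set.uIoc_of_le hc_le] at hs
        exact hle s ⟨le_of_lt hs.1, hs.2⟩
  -- summable majorant
  set u : ℕ → ℝ := fun n => ‖x₀‖ * (M ^ n * (d - c) ^ n / n.factorial) with hu_def
  have hdc : (0:ℝ) ≤ d - c := sub_nonneg.2 hcd
  have hu : Summable u := by
    have h := (Real.summable_pow_div_factorial (M * (d - c))).mul_left ‖x₀‖
    refine h.congr fun n => ?_
    rw [mul_pow]
  have hbu : ∀ n t, ‖A n t‖ ≤ u n := by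
    intro n t
    refine le_trans (bound n t) ?_
    have h1 : (0:ℝ) ≤ p t - c := sub_nonneg.2 (hp_mem t).1
    have h2 : p t - c ≤ d - c := by
      have := (hp_mem t).2; linarith
    have h3 := pow_le_pow_left₀ h1 h2 n
    show ‖x₀‖ * (M ^ n * (p t - c) ^ n / n.factorial) ≤
      ‖x₀‖ * (M ^ n * (d - c) ^ n / n.factorial)
    gcongr
  set X₀ : ℝ → E := fun t => ∑' n, A n t with hX₀_def
  have hX₀c : Continuous X₀ := continuous_tsum contA hu hbu
  have hsum : ∀ t, Summable fun n => A n t := fun t =>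
    Summable.of_norm_bounded hu (fun n => hbu n t)
  -- integral equation
  have key : ∀ t, (∫ s in c..(p t), G s (X₀ s)) = ∑' n, A (n + 1) t := by
    intro t
    have hc_le : c ≤ p t := (hp_mem t).1
    have e1 : ∀ s, G s (X₀ s) = ∑' n, G s (A n s) := fun s =>
      (G s).map_tsum (hsum s)
    rw [intervalIntegral.integral_congr (g := fun s => ∑' n, G s (A n s))
      (fun s _ => e1 s)]
    rw [intervalIntegral.integral_of_le hc_le]
    have hswap : (∫ s in Set.Ioc c (p t), ∑' n, G s (A n s)) =
        ∑' n, ∫ s in Set.Ioc c (p t), G s (A n s) := by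
      apply MeasureTheory.integral_tsum
      · exact fun n => ((hG.clm_apply (contA n)).aestronglyMeasurable).restrict
      · have hb : ∀ n, (∫⁻ s in Set.Ioc c (p t), ‖G s (A n s)‖₊)
            ≤ ENNReal.ofReal (M * u n) * ENNReal.ofReal (d - c) := by
          intro n
          have hptle : p t - c ≤ d - c := by have := (hp_mem t).2; linarith
          calc (∫⁻ s in Set.Ioc c (p t), ‖G s (A n s)‖₊)
              ≤ ∫⁻ _ in Set.Ioc c (p t), ENNReal.ofReal (M * u n) := by
                apply MeasureTheory.lintegral_mono
                intro s
                show (‖G s (A n s)‖₊ : ENNReal) ≤ ENNReal.ofReal (M * u n)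
                rw [← ENNReal.ofReal_coe_nnreal, coe_nnnorm]
                apply ENNReal.ofReal_le_ofReal
                calc ‖G s (A n s)‖ ≤ ‖G s‖ * ‖A n s‖ := (G s).le_opNorm _
                  _ ≤ M * u n := mul_le_mul (hM s) (hbu n s) (norm_nonneg _) hM0
            _ = ENNReal.ofReal (M * u n) * volume (Set.Ioc c (p t)) := by
                rw [MeasureTheory.lintegral_const, Measure.restrict_apply MeasurableSet.univ,
                  Set.univ_inter]
            _ ≤ ENNReal.ofReal (M * u n) * ENNReal.ofReal (d - c) := by
                rw [Real.volume_Ioc]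
                exact mul_le_mul_right (ENNReal.ofReal_le_ofReal (by linarith)) _
        refine ne_top_of_le_ne_top ?_ (ENNReal.tsum_le_tsum hb)
        rw [ENNReal.tsum_mul_right]
        refine ENNReal.mul_ne_top ?_ ENNReal.ofReal_ne_top
        have hMu : ∀ n, 0 ≤ M * u n := by
          intro n
          have : 0 ≤ u n := le_trans (norm_nonneg _) (hbu n c)
          positivity
        rw [← ENNReal.ofReal_tsum_of_nonneg hMu (hu.mul_left M)]
        exact ENNReal.ofReal_ne_top
    rw [hswap]
    apply tsum_congr
    intro n
    rw [hAs n t, intervalIntegral.integral_of_le hc_le]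
  have inteq : ∀ t, X₀ t = x₀ + ∫ s in c..(p t), G s (X₀ s) := by
    intro t
    rw [key t]
    have h := Summable.tsum_eq_zero_add (hsum t)
    rw [hA0] at h
    exact h
  refine ⟨fun t => x₀ + ∫ s in c..t, G s (X₀ s), fun t => G t (X₀ t),
    continuous_const.add (continuous_primitive_of_continuous (hG.clm_apply hX₀c) c),
    hG.clm_apply hX₀c, ?_, ?_, ?_⟩
  · intro t
    exact (intervalIntegral.integral_hasDerivAt_right
      ((hG.clm_apply hX₀c).intervalIntegrable _ _)
      ((hG.clm_apply hX₀c).stronglyMeasurable.stronglyMeasurableAtFilter)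
      (hG.clm_apply hX₀c).continuousAt).const_add x₀
  · simp
  · intro t ht
    show G t (X₀ t) = G t (x₀ + ∫ s in c..t, G s (X₀ s))
    congr 1
    rw [inteq t, hp_id t ht]

end Pre

set_option maxHeartbeats 2000000 in
/-- Gronwall-type regularity via bootstrap: let
`λ₀ ∈ D⁰([c,d],(ℝᵐ)*)` (a bounded linear functional on `C⁰₀([c,d],ℝᵐ)`), let
`h₁ : [c,d] → Lin(ℝᵐ,ℝᵐ)` and `h₂ : [c,d] → (ℝᵐ)*` be continuous, and suppose
`λ₀' = λ₀ h₁ + h₂` in the generalized sense. Then `λ₀` is represented by a `C¹`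
function. -/
theorem generalized_gronwall_bootstrap
    (m : ℕ) (c d : ℝ) (hcd : c < d)
    (lam : (ℝ → (Fin m → ℝ)) → ℝ)
    (hadd : ∀ α β : ℝ → (Fin m → ℝ), MemCk0 0 c d α → MemCk0 0 c d β →
      lam (α + β) = lam α + lam β)
    (hsmul : ∀ (r : ℝ) (α : ℝ → (Fin m → ℝ)), MemCk0 0 c d α →
      lam (r • α) = r * lam α)
    (hbound : ∃ C : ℝ, ∀ (α : ℝ → (Fin m → ℝ)) (K : ℝ), MemCk0 0 c d α →
      (∀ t ∈ Set.Icc c d, ‖α t‖ ≤ K) → |lam α| ≤ C * K)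
    (h₁ : ℝ → ((Fin m → ℝ) →L[ℝ] (Fin m → ℝ))) (hh₁ : ContinuousOn h₁ (Set.Icc c d))
    (h₂ : ℝ → ((Fin m → ℝ) →L[ℝ] ℝ)) (hh₂ : ContinuousOn h₂ (Set.Icc c d))
    (heq : ∀ α : ℝ → (Fin m → ℝ), ContDiff ℝ 1 α → α c = 0 → α d = 0 →
      deriv α c = 0 → deriv α d = 0 →
      - lam (deriv α) = lam (fun t => h₁ t (α t)) + ∫ t in c..d, h₂ t (α t)) :
    ∃ l : ℝ → ((Fin m → ℝ) →L[ℝ] ℝ), ContDiffOn ℝ 1 l (Set.Icc c d) ∧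
      ∀ α : ℝ → (Fin m → ℝ), MemCk0 0 c d α →
        lam α = ∫ t in c..d, l t (α t) := by
  classical
  have hcd' : c ≤ d := le_of_lt hcd
  have hdc0 : d - c ≠ 0 := by linarith
  -- clamp
  set p : ℝ → ℝ := fun t => max c (min t d) with hp_def
  have hp_cont : Continuous p := continuous_const.max (continuous_id.min continuous_const)
  have hp_mem : ∀ t, p t ∈ Icc c d := fun t =>
    ⟨le_max_left _ _, max_le hcd' (min_le_right _ _)⟩
  have hp_id : ∀ t ∈ Icc c d, p t = t := fun t ht => by
    simp [hp_def, min_eq_left ht.2, max_eq_right ht.1]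
  have hp_c : ∀ t, t ≤ c → p t = c := fun t ht => by
    have h : min t d ≤ c := le_trans (min_le_left _ _) ht
    rw [hp_def]; exact max_eq_left h
  have hp_d : ∀ t, d ≤ t → p t = d := fun t ht => by
    simp [hp_def, min_eq_right ht, max_eq_right hcd']
  -- extended coefficients
  set g₁ : ℝ → ((Fin m → ℝ) →L[ℝ] (Fin m → ℝ)) := fun t => h₁ (p t) with hg₁_def
  have hg₁c : Continuous g₁ := hh₁.comp_continuous hp_cont hp_mem
  have hg₁eq : ∀ t ∈ Icc c d, g₁ t = h₁ t := fun t ht => by rw [hg₁_def]; simp [hp_id t ht]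
  set g₂ : ℝ → ((Fin m → ℝ) →L[ℝ] ℝ) := fun t => h₂ (p t) with hg₂_def
  have hg₂c : Continuous g₂ := hh₂.comp_continuous hp_cont hp_mem
  have hg₂eq : ∀ t ∈ Icc c d, g₂ t = h₂ t := fun t ht => by rw [hg₂_def]; simp [hp_id t ht]
  obtain ⟨M, hM⟩ := isCompact_Icc.exists_bound_of_continuousOn hh₁
  have hg₁M : ∀ t, ‖g₁ t‖ ≤ M := fun t => hM _ (hp_mem t)
  -- fundamental solutions
  obtain ⟨Φ, Φ', hΦc, hΦ'c, hΦder, hΦinit, hΦ'eq⟩ :=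
    ode_exists c d hcd' (fun t => -((ContinuousLinearMap.compL ℝ (Fin m → ℝ) (Fin m → ℝ) (Fin m → ℝ)) (g₁ t)))
      (((ContinuousLinearMap.compL ℝ (Fin m → ℝ) (Fin m → ℝ) (Fin m → ℝ)).continuous.comp hg₁c).neg) M
      (fun t => by
        rw [norm_neg]
        refine ContinuousLinearMap.opNorm_le_bound _
          (le_trans (norm_nonneg _) (hg₁M t)) fun X => ?_
        exact le_trans (ContinuousLinearMap.opNorm_comp_le _ _)
          (mul_le_mul_of_nonneg_right (hg₁M t) (norm_nonneg _)))
      (ContinuousLinearMap.id ℝ (Fin m → ℝ))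
  obtain ⟨Ψ, Ψ', hΨc, hΨ'c, hΨder, hΨinit, hΨ'eq⟩ :=
    ode_exists c d hcd' (fun t => (ContinuousLinearMap.compL ℝ (Fin m → ℝ) (Fin m → ℝ) (Fin m → ℝ)).flip (g₁ t))
      ((ContinuousLinearMap.compL ℝ (Fin m → ℝ) (Fin m → ℝ) (Fin m → ℝ)).flip.continuous.comp hg₁c) M
      (fun t => by
        refine ContinuousLinearMap.opNorm_le_bound _
          (le_trans (norm_nonneg _) (hg₁M t)) fun X => ?_
        show ‖X.comp (g₁ t)‖ ≤ M * ‖X‖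
        calc ‖X.comp (g₁ t)‖ ≤ ‖X‖ * ‖g₁ t‖ := ContinuousLinearMap.opNorm_comp_le _ _
          _ ≤ ‖X‖ * M := mul_le_mul_of_nonneg_left (hg₁M t) (norm_nonneg _)
          _ = M * ‖X‖ := mul_comm _ _)
      (ContinuousLinearMap.id ℝ (Fin m → ℝ))
  have hΦ'f : ∀ t ∈ Icc c d, Φ' t = -((g₁ t).comp (Φ t)) := by
    intro t ht; rw [hΦ'eq t ht]; rfl
  have hΨ'f : ∀ t ∈ Icc c d, Ψ' t = (Ψ t).comp (g₁ t) := by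
    intro t ht; rw [hΨ'eq t ht]; rfl
  -- Ψ ∘ Φ = id on Icc
  have hΨΦ : ∀ t ∈ Icc c d, ∀ x, Ψ t (Φ t x) = x := by
    have hR : ∀ t ∈ Icc c d, (Ψ t).comp (Φ t) = ContinuousLinearMap.id ℝ (Fin m → ℝ) := by
      have := constant_of_has_deriv_right_zero
        (f := fun t => (Ψ t).comp (Φ t)) (a := c) (b := d)
        (Continuous.continuousOn (by
          exact (ContinuousLinearMap.compL ℝ (Fin m → ℝ) (Fin m → ℝ) (Fin m → ℝ)).continuous.comp hΨc |>.clm_apply hΦc))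
        ?_
      · intro t ht
        have h2 : (Ψ t).comp (Φ t) = (Ψ c).comp (Φ c) := this t ht
        rw [hΦinit, hΨinit] at h2
        rw [h2]; ext v; simp
      · intro x hx
        have hD : HasDerivAt (fun t => (Ψ t).comp (Φ t))
            ((Ψ' x).comp (Φ x) + (Ψ x).comp (Φ' x)) x :=
          (hΨder x).clm_comp (hΦder x)
        have hx' : x ∈ Icc c d := ⟨hx.1, le_of_lt hx.2⟩
        have : (Ψ' x).comp (Φ x) + (Ψ x).comp (Φ' x) = 0 := by
          rw [hΦ'f x hx', hΨ'f x hx']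
          ext v
          simp
        rw [this] at hD
        exact hD.hasDerivWithinAt
    intro t ht x
    have := hR t ht
    calc Ψ t (Φ t x) = ((Ψ t).comp (Φ t)) x := rfl
      _ = x := by rw [this]; rfl
  have hΦΨ : ∀ t ∈ Icc c d, ∀ x, Φ t (Ψ t x) = x := by
    intro t ht x
    have hinj : Function.Injective (Φ t) := by
      intro a b hab
      have := congrArg (Ψ t) hab
      rwa [hΨΦ t ht, hΨΦ t ht] at this
    have hsurj : Function.Surjective (Φ t) :=
      (LinearMap.injective_iff_surjective (f := (Φ t : (Fin m → ℝ) →ₗ[ℝ] (Fin m → ℝ)))).1 hinj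
    obtain ⟨y, hy⟩ := hsurj x
    rw [← hy, hΨΦ t ht]
  -- MemCk0 helper
  have mk : ∀ f : ℝ → (Fin m → ℝ), Continuous f → f c = 0 → f d = 0 → MemCk0 0 c d f := by
    intro f hf h1 h2
    refine ⟨contDiff_zero.2 hf, ?_⟩
    intro j hj
    have : j = 0 := Nat.le_zero.1 hj
    subst this
    simp [iteratedDeriv_zero, h1, h2]
  -- locality of lam
  obtain ⟨C, hC⟩ := hbound
  have lam_congr : ∀ f g : ℝ → (Fin m → ℝ), MemCk0 0 c d f → MemCk0 0 c d g →
      (∀ t ∈ Icc c d, f t = g t) → lam f = lam g := by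
    intro f g hf hg hfg
    have hcf : Continuous f := contDiff_zero.1 hf.1
    have hcg : Continuous g := contDiff_zero.1 hg.1
    have hf0 := (hf.2 0 le_rfl); have hg0 := (hg.2 0 le_rfl)
    rw [iteratedDeriv_zero] at hf0 hg0
    have hcg' : Continuous ((-1 : ℝ) • g) := by
      show Continuous fun x => (-1 : ℝ) • g x
      exact hcg.const_smul (-1 : ℝ)
    have hmg : MemCk0 0 c d ((-1 : ℝ) • g) :=
      mk _ hcg' (by simp [hg0.1]) (by simp [hg0.2])
    have hdiff : MemCk0 0 c d (f + (-1 : ℝ) • g) :=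
      mk _ (hcf.add hcg')
        (by simp [Pi.add_apply, hf0.1, hg0.1]) (by simp [Pi.add_apply, hf0.2, hg0.2])
    have e1 : lam (f + (-1 : ℝ) • g) = lam f + (-1) * lam g := by
      rw [hadd f _ hf hmg, hsmul (-1) g hg]
    have e2 : |lam (f + (-1 : ℝ) • g)| ≤ C * 0 := by
      apply hC _ 0 hdiff
      intro t ht
      simp [Pi.add_apply, hfg t ht]
    rw [mul_zero] at e2
    have := abs_nonneg (lam (f + (-1 : ℝ) • g))
    have h0 : lam (f + (-1 : ℝ) • g) = 0 := by
      have := abs_eq_zero.1 (le_antisymm e2 this)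
      exact this
    rw [h0] at e1
    linarith
  -- the bump function
  set φ : ℝ → ℝ := fun x => 6 / (d - c) ^ 3 * ((x - c) * (d - x)) with hφ_def
  have hφc : Continuous φ := by fun_prop
  have hφ0c : φ c = 0 := by simp [hφ_def]
  have hφ0d : φ d = 0 := by simp [hφ_def]
  have hφint : (∫ t in c..d, φ t) = 1 := by
    have h1 : (∫ t in c..d, ((t - c) * (d - t))) = (d - c) ^ 3 / 6 := by
      have e : ∀ t : ℝ, (t - c) * (d - t) = (c + d) * t - t ^ 2 - c * d := fun t => by ring
      rw [intervalIntegral.integral_congr (g := fun t => (c + d) * t - t ^ 2 - c * d)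
        (fun t _ => e t)]
      rw [intervalIntegral.integral_sub (by apply Continuous.intervalIntegrable; fun_prop)
          (by apply Continuous.intervalIntegrable; fun_prop),
        intervalIntegral.integral_sub (by apply Continuous.intervalIntegrable; fun_prop)
          (by apply Continuous.intervalIntegrable; fun_prop),
        intervalIntegral.integral_const_mul, integral_id, integral_pow,
        intervalIntegral.integral_const]
      simp only [smul_eq_mul]
      push_cast
      ring
    simp only [hφ_def]
    rw [intervalIntegral.integral_const_mul, h1]
    field_simp
  set φt : ℝ → ℝ := fun t => φ (p t) with hφt_def
  have hφtc : Continuous φt := hφc.comp hp_cont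
  have hφt_icc : ∀ t ∈ Icc c d, φt t = φ t := fun t ht => by rw [hφt_def]; simp [hp_id t ht]
  have hφtc0 : φt c = 0 := by rw [hφt_def]; simp [hp_id c ⟨le_rfl, hcd'⟩, hφ0c]
  have hφtd0 : φt d = 0 := by rw [hφt_def]; simp [hp_id d ⟨hcd', le_rfl⟩, hφ0d]
  -- the kernel pieces
  set HH : ℝ → ((Fin m → ℝ) →L[ℝ] ℝ) := fun t => (g₂ t).comp (Φ t) with hHH_def
  have hHHc : Continuous HH := by
    exact ((ContinuousLinearMap.compL ℝ (Fin m → ℝ) (Fin m → ℝ) ℝ).continuous.comp hg₂c).clm_apply hΦc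
  set W : ℝ → ((Fin m → ℝ) →L[ℝ] ℝ) := fun s => ∫ t in s..d, HH t with hW_def
  have hWder : ∀ s, HasDerivAt W (-HH s) s := by
    intro s
    exact intervalIntegral.integral_hasDerivAt_left (hHHc.intervalIntegrable _ _)
      (hHHc.stronglyMeasurable.stronglyMeasurableAtFilter) hHHc.continuousAt
  have hWc : Continuous W := by
    refine continuous_iff_continuousAt.2 fun s => (hWder s).continuousAt
  have hWdiff : ContDiff ℝ 1 W := by
    rw [contDiff_one_iff_deriv]
    constructor
    · exact fun s => (hWder s).differentiableAt
    · have : deriv W = fun s => -HH s := funext fun s => (hWder s).deriv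
      rw [this]; exact hHHc.neg
  -- the constant functional L
  have hΦxc : ∀ x : Fin m → ℝ, Continuous fun t => φt t • Φ t x := fun x =>
    hφtc.smul (hΦc.clm_apply continuous_const)
  have hmkφ : ∀ x, MemCk0 0 c d (fun t => φt t • Φ t x) := fun x =>
    mk _ (hΦxc x) (by simp [hφtc0]) (by simp [hφtd0])
  set LL : (Fin m → ℝ) →ₗ[ℝ] ℝ :=
    { toFun := fun x => lam (fun t => φt t • Φ t x)
      map_add' := by
        intro x y
        show lam (fun t => φt t • Φ t (x + y)) =
          lam (fun t => φt t • Φ t x) + lam (fun t => φt t • Φ t y)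
        have e : (fun t => φt t • Φ t (x + y)) =
            (fun t => φt t • Φ t x) + (fun t => φt t • Φ t y) := by
          funext t
          show φt t • Φ t (x + y) = φt t • Φ t x + φt t • Φ t y
          rw [(Φ t).map_add, smul_add]
        rw [e, hadd _ _ (hmkφ x) (hmkφ y)]
      map_smul' := by
        intro r x
        show lam (fun t => φt t • Φ t (r • x)) = r * lam (fun t => φt t • Φ t x)
        have e : (fun t => φt t • Φ t (r • x)) = r • (fun t => φt t • Φ t x) := by
          funext t
          show φt t • Φ t (r • x) = r • (φt t • Φ t x)
          rw [(Φ t).map_smul, smul_comm]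
        rw [e, hsmul r _ (hmkφ x)] } with hLL_def
  set LC := LinearMap.toContinuousLinearMap LL with hLC_def
  have hLCapp : ∀ x, LC x = lam (fun t => φt t • Φ t x) := fun x => rfl
  set AA : (Fin m → ℝ) →L[ℝ] ℝ := ∫ s in c..d, φ s • W s with hAA_def
  set l : ℝ → ((Fin m → ℝ) →L[ℝ] ℝ) := fun s => ((LC - W s) + AA).comp (Ψ s) with hl_def
  have hΨdiff : ContDiff ℝ 1 Ψ := by
    rw [contDiff_one_iff_deriv]
    refine ⟨fun s => (hΨder s).differentiableAt, ?_⟩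
    have : deriv Ψ = Ψ' := funext fun s => (hΨder s).deriv
    rw [this]; exact hΨ'c
  have hldiff : ContDiff ℝ 1 l := by
    apply ContDiff.clm_comp _ hΨdiff
    exact (contDiff_const.sub hWdiff).add contDiff_const
  refine ⟨l, hldiff.contDiffOn, ?_⟩
  intro γ hγ
  have hγc : Continuous γ := contDiff_zero.1 hγ.1
  have hγ0 := hγ.2 0 le_rfl
  rw [iteratedDeriv_zero] at hγ0
  obtain ⟨hγ0c, hγ0d⟩ := hγ0
  set δ : ℝ → (Fin m → ℝ) := fun t => Ψ t (γ t) with hδ_def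
  have hδc : Continuous δ := hΨc.clm_apply hγc
  have hδ0c : δ c = 0 := by rw [hδ_def]; simp [hγ0c]
  have hδ0d : δ d = 0 := by rw [hδ_def]; simp [hγ0d]
  set w : (Fin m → ℝ) := ∫ s in c..d, δ s with hw_def
  set η : ℝ → (Fin m → ℝ) := fun t => δ (p t) - φt t • w with hη_def
  have hηc : Continuous η := (hδc.comp hp_cont).sub (hφtc.smul continuous_const)
  have hηicc : ∀ t ∈ Icc c d, η t = δ t - φ t • w := fun t ht => by
    rw [hη_def]; simp only []; rw [hp_id t ht, hφt_icc t ht]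
  have hη0l : ∀ t, t ≤ c → η t = 0 := fun t ht => by
    rw [hη_def]; simp only []
    rw [hp_c t ht, hφt_def]; simp only []
    rw [hp_c t ht, hδ0c, hφ0c]; simp
  have hη0r : ∀ t, d ≤ t → η t = 0 := fun t ht => by
    rw [hη_def]; simp only []
    rw [hp_d t ht, hφt_def]; simp only []
    rw [hp_d t ht, hδ0d, hφ0d]; simp
  set β : ℝ → (Fin m → ℝ) := fun t => ∫ s in c..t, η s with hβ_def
  have hβder : ∀ t, HasDerivAt β (η t) t := fun t =>
    intervalIntegral.integral_hasDerivAt_right (hηc.intervalIntegrable _ _)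
      (hηc.stronglyMeasurable.stronglyMeasurableAtFilter) hηc.continuousAt
  have hβc : Continuous β := continuous_primitive_of_continuous hηc c
  have hβ0c : β c = 0 := by rw [hβ_def]; simp
  have hβ0d : β d = 0 := by
    rw [hβ_def]; simp only []
    have e1 : (∫ s in c..d, η s) = (∫ s in c..d, δ s) - (∫ s in c..d, φ s • w) := by
      rw [← intervalIntegral.integral_sub (f := fun s => δ s) (g := fun s => φ s • w) (hδc.intervalIntegrable _ _)
        ((hφc.smul continuous_const).intervalIntegrable _ _)]
      apply intervalIntegral.integral_congr
      intro t ht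
      rw [uIcc_of_le hcd'] at ht
      exact hηicc t ht
    rw [e1, intervalIntegral.integral_smul_const, hφint, one_smul, ← hw_def, sub_self]
  have hβ0l : ∀ t, t ≤ c → β t = 0 := fun t ht => by
    rw [hβ_def]; simp only []
    rw [intervalIntegral.integral_congr (g := fun _ => (0 : Fin m → ℝ))
      (fun s hs => hη0l s (le_trans hs.2 (by simp [max_eq_left ht])))]
    simp
  have hβ0r : ∀ t, d ≤ t → β t = 0 := fun t ht => by
    have hadj : (∫ s in c..d, η s) + (∫ s in d..t, η s) = ∫ s in c..t, η s :=
      intervalIntegral.integral_add_adjacent_intervals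
        (hηc.intervalIntegrable c d) (hηc.intervalIntegrable d t)
    have h2 : (∫ s in d..t, η s) = 0 := by
      rw [intervalIntegral.integral_congr (g := fun _ => (0 : Fin m → ℝ))
        (fun s hs => hη0r s (le_trans (by simp [min_eq_left ht]) hs.1))]
      simp
    have h1 : (∫ s in c..d, η s) = 0 := hβ0d
    rw [hβ_def]; simp only []
    rw [← hadj, h1, h2, add_zero]
  -- the test function α
  set α : ℝ → (Fin m → ℝ) := fun t => Φ t (β t) with hα_def
  have hαder : ∀ t, HasDerivAt α (Φ' t (β t) + Φ t (η t)) t := fun t =>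
    (hΦder t).clm_apply (hβder t)
  have hderivα : deriv α = fun t => Φ' t (β t) + Φ t (η t) :=
    funext fun t => (hαder t).deriv
  have hαc : Continuous α := hΦc.clm_apply hβc
  have hdαc : Continuous (deriv α) := by
    rw [hderivα]; exact (hΦ'c.clm_apply hβc).add (hΦc.clm_apply hηc)
  have hα1 : ContDiff ℝ 1 α := contDiff_one_iff_deriv.2
    ⟨fun t => (hαder t).differentiableAt, hdαc⟩
  have hα0c : α c = 0 := by rw [hα_def]; simp only []; rw [hβ0c]; simp
  have hα0d : α d = 0 := by rw [hα_def]; simp only []; rw [hβ0d]; simp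
  have hdα0c : deriv α c = 0 := by
    rw [hderivα]; simp only []; rw [hβ0c, hη0l c le_rfl]; simp
  have hdα0d : deriv α d = 0 := by
    rw [hderivα]; simp only []; rw [hβ0d, hη0r d le_rfl]; simp
  have heqα := heq α hα1 hα0c hα0d hdα0c hdα0d
  have hβout : ∀ t, t ∉ Icc c d → β t = 0 := by
    intro t ht
    rw [Set.mem_Icc, not_and_or] at ht
    rcases ht with h | h
    · exact hβ0l t (le_of_not_ge h)
    · exact hβ0r t (le_of_not_ge h)
  have hg₁α : (fun t => h₁ t (α t)) = fun t => g₁ t (α t) := by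
    funext t
    by_cases ht : t ∈ Icc c d
    · rw [hg₁eq t ht]
    · have hαt : α t = 0 := by rw [hα_def]; simp only []; rw [hβout t ht]; simp
      rw [hαt]; simp
  have hsum2 : (fun t => Φ t (η t)) = deriv α + fun t => g₁ t (α t) := by
    funext t
    show Φ t (η t) = deriv α t + g₁ t (α t)
    rw [hderivα, hα_def]
    show Φ t (η t) = (Φ' t (β t) + Φ t (η t)) + g₁ t (Φ t (β t))
    by_cases ht : t ∈ Icc c d
    · rw [hΦ'f t ht]
      show Φ t (η t) = (-((g₁ t).comp (Φ t))) (β t) + Φ t (η t) + g₁ t (Φ t (β t))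
      rw [ContinuousLinearMap.neg_apply, ContinuousLinearMap.comp_apply]
      abel
    · rw [hβout t ht]; simp
  have hlamΦη : lam (fun t => Φ t (η t)) = - ∫ t in c..d, h₂ t (α t) := by
    have h3 : lam (fun t => Φ t (η t)) = lam (deriv α) + lam (fun t => g₁ t (α t)) := by
      rw [hsum2]
      exact hadd _ _ (mk _ hdαc hdα0c hdα0d)
        (mk _ (hg₁c.clm_apply hαc) (by rw [hα0c]; simp) (by rw [hα0d]; simp))
    have h4 : lam (fun t => h₁ t (α t)) = lam (fun t => g₁ t (α t)) := by rw [hg₁α]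
    rw [h3, ← h4]
    linarith [heqα]
  -- integration by parts
  have hIBP : (∫ t in c..d, h₂ t (α t)) = ∫ t in c..d, W t (η t) := by
    have e1 : (∫ t in c..d, h₂ t (α t)) = ∫ t in c..d, HH t (β t) := by
      apply intervalIntegral.integral_congr
      intro t ht
      rw [uIcc_of_le hcd'] at ht
      rw [hHH_def]
      show h₂ t (α t) = ((g₂ t).comp (Φ t)) (β t)
      rw [ContinuousLinearMap.comp_apply, hg₂eq t ht, hα_def]
    have hPder : ∀ t, HasDerivAt (fun t => W t (β t)) (-(HH t (β t)) + W t (η t)) t := by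
      intro t
      have h := (hWder t).clm_apply (hβder t)
      simpa using h
    have e2 : (∫ t in c..d, (-(HH t (β t)) + W t (η t))) =
        (fun t => W t (β t)) d - (fun t => W t (β t)) c :=
      intervalIntegral.integral_eq_sub_of_hasDerivAt (fun t _ => hPder t)
        ((((hHHc.clm_apply hβc).neg).add (hWc.clm_apply hηc)).intervalIntegrable _ _)
    have e3 : (∫ t in c..d, (-(HH t (β t)) + W t (η t))) =
        -(∫ t in c..d, HH t (β t)) + ∫ t in c..d, W t (η t) := by
      rw [intervalIntegral.integral_add (f := fun t => -(HH t (β t))) (g := fun t => W t (η t)) (((hHHc.clm_apply hβc).neg).intervalIntegrable _ _)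
        ((hWc.clm_apply hηc).intervalIntegrable _ _), intervalIntegral.integral_neg]
    have e4 : (fun t => W t (β t)) d - (fun t => W t (β t)) c = 0 := by
      simp only []
      rw [hβ0c, hβ0d]
      simp
    rw [e2, e4] at e3
    rw [e1]
    linarith
  -- decomposition of lam γ
  have hΦδmk : MemCk0 0 c d (fun t => Φ t (δ (p t))) :=
    mk _ (hΦc.clm_apply (hδc.comp hp_cont))
      (by rw [hp_id c ⟨le_rfl, hcd'⟩, hδ0c]; simp)
      (by rw [hp_id d ⟨hcd', le_rfl⟩, hδ0d]; simp)
  have hΦηmk : MemCk0 0 c d (fun t => Φ t (η t)) :=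
    mk _ (hΦc.clm_apply hηc)
      (by rw [hη0l c le_rfl]; simp) (by rw [hη0r d le_rfl]; simp)
  have hΦδsplit : (fun t => Φ t (δ (p t))) =
      (fun t => Φ t (η t)) + fun t => φt t • Φ t w := by
    funext t
    show Φ t (δ (p t)) = Φ t (η t) + φt t • Φ t w
    rw [hη_def]
    show Φ t (δ (p t)) = Φ t (δ (p t) - φt t • w) + φt t • Φ t w
    rw [(Φ t).map_sub, (Φ t).map_smul]
    abel
  have hlam1 : lam (fun t => Φ t (δ (p t))) =
      lam (fun t => Φ t (η t)) + lam (fun t => φt t • Φ t w) := by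
    rw [hΦδsplit]
    exact hadd _ _ hΦηmk (hmkφ w)
  have hlam2 : lam (fun t => Φ t (δ (p t))) = lam γ := by
    apply lam_congr _ _ hΦδmk hγ
    intro t ht
    rw [hp_id t ht, hδ_def]
    exact hΦΨ t ht (γ t)
  have hlamv : lam (fun t => φt t • Φ t w) = LC w := (hLCapp w).symm
  -- express everything as integrals against δ
  have hLCw : LC w = ∫ s in c..d, LC (δ s) := by
    rw [hw_def]
    exact (LC.intervalIntegral_comp_comm (hδc.intervalIntegrable _ _)).symm
  have hAAint : (∫ t in c..d, φ t • (W t w)) = AA w := by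
    have h := (ContinuousLinearMap.apply ℝ ℝ w).intervalIntegral_comp_comm
      ((hφc.smul hWc).intervalIntegrable (μ := volume) c d)
    calc (∫ t in c..d, φ t • (W t w))
        = ∫ t in c..d, (ContinuousLinearMap.apply ℝ ℝ w) (φ t • W t) := by
          apply intervalIntegral.integral_congr
          intro s _
          show φ s • (W s w) = ((φ s • W s) : (Fin m → ℝ) →L[ℝ] ℝ) w
          rw [ContinuousLinearMap.smul_apply]
      _ = (ContinuousLinearMap.apply ℝ ℝ w) (∫ s in c..d, φ s • W s) := h
      _ = AA w := by rw [hAA_def]; rfl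
  have hAAw : AA w = ∫ s in c..d, AA (δ s) := by
    rw [hw_def]
    exact (AA.intervalIntegral_comp_comm (hδc.intervalIntegrable _ _)).symm
  have hWη : (∫ t in c..d, W t (η t)) =
      (∫ t in c..d, W t (δ t)) - ∫ t in c..d, φ t • (W t w) := by
    rw [← intervalIntegral.integral_sub (f := fun t => W t (δ t)) (g := fun t => φ t • (W t w)) ((hWc.clm_apply hδc).intervalIntegrable _ _)
      ((hφc.smul (hWc.clm_apply continuous_const)).intervalIntegrable _ _)]
    apply intervalIntegral.integral_congr
    intro t ht
    rw [uIcc_of_le hcd'] at ht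
    show W t (η t) = W t (δ t) - φ t • (W t w)
    rw [hηicc t ht, (W t).map_sub, (W t).map_smul]
  -- assemble
  have final1 : lam γ = (∫ s in c..d, LC (δ s)) - (∫ t in c..d, W t (δ t))
      + ∫ s in c..d, AA (δ s) := by
    have h5 : lam γ = -(∫ t in c..d, W t (η t)) + LC w := by
      rw [← hlam2, hlam1, hlamv, hlamΦη, hIBP]
    rw [h5, hWη, hLCw, ← hAAw, hAAint]
    ring
  have final2 : (∫ t in c..d, l t (γ t)) =
      ∫ s in c..d, (LC (δ s) - W s (δ s) + AA (δ s)) := by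
    apply intervalIntegral.integral_congr
    intro s hs
    show l s (γ s) = LC (δ s) - W s (δ s) + AA (δ s)
    rw [hl_def]
    show (((LC - W s) + AA).comp (Ψ s)) (γ s) = LC (δ s) - W s (δ s) + AA (δ s)
    rw [ContinuousLinearMap.comp_apply, ContinuousLinearMap.add_apply,
      ContinuousLinearMap.sub_apply, hδ_def]
  have final3 : (∫ s in c..d, (LC (δ s) - W s (δ s) + AA (δ s))) =
      ((∫ s in c..d, LC (δ s)) - ∫ t in c..d, W t (δ t)) + ∫ s in c..d, AA (δ s) := by
    have i1 : IntervalIntegrable (fun s => LC (δ s) - W s (δ s)) volume c d :=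
      ((LC.continuous.comp hδc).sub (hWc.clm_apply hδc)).intervalIntegrable _ _
    have i2 : IntervalIntegrable (fun s => AA (δ s)) volume c d :=
      (AA.continuous.comp hδc).intervalIntegrable _ _
    have i3 : IntervalIntegrable (fun s => LC (δ s)) volume c d :=
      (LC.continuous.comp hδc).intervalIntegrable _ _
    have i4 : IntervalIntegrable (fun s => W s (δ s)) volume c d :=
      (hWc.clm_apply hδc).intervalIntegrable _ _
    rw [intervalIntegral.integral_add i1 i2, intervalIntegral.integral_sub i3 i4]
  rw [final1, final2, final3]
end

section
/- Euler–Lagrange regularity: let L : [a,b] × ℝⁿ × ℝⁿ → ℝ be continuous with continuous partial derivatives ∂L/∂q and ∂L/∂q̇, and let γ = (q, q̇) be a C¹ curve such that ∫_a^b [∂L/∂q(t,q(t),q̇(t))·v(t) + ∂L/∂q̇(t,q(t),q̇(t))·v'(t)] dt = 0 for all C¹ maps v : [a,b] → ℝⁿ with support in (a,b). Then t ↦ ∂L/∂q̇(t,q(t),q̇(t)) is of class C¹ and satisfies (d/dt) ∂L/∂q̇(t,q(t),q̇(t)) = ∂L/∂q(t,q(t),q̇(t)) on [a,b]. -/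
/-!
Let `H` be the primitive of `t ↦ ∂L/∂q(t, q t, q̇ t)`. Integrating the `∂L/∂q` term by parts turns
the weak equation into `∫ (∂L/∂q̇ - H)(v') = 0` for all test fields `v`, so by the du Bois-Reymond
lemma, applied in each direction, `∂L/∂q̇ - H` is constant on `[a, b]`. Hence `∂L/∂q̇ = H + const`
is `C¹` with derivative `∂L/∂q`.

For the du Bois-Reymond lemma (a continuous `k` with `∫ k ψ' = 0` for all test functions `ψ` is
constant): a continuous function of mean zero with compact support in `(a, b)` is the derivative
of a test function, so `k` annihilates it. Splitting any test function `g` as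
`(g - (∫ g) η) + (∫ g) η` for a fixed bump `η` of mass one shows that `k - ∫ k η` annihilates all
test functions, hence vanishes.
-/

open MeasureTheory Set
open scoped ContDiff

lemma IsCompact.exists_subset_Icc_of_subset_Ioo {K : Set ℝ} (hK : IsCompact K) {a b : ℝ}
    (hKab : K ⊆ Ioo a b) : ∃ c d, a < c ∧ d < b ∧ K ⊆ Icc c d := by
  rcases K.eq_empty_or_nonempty with rfl | hne
  · exact ⟨a + 1, b - 1, by linarith, by linarith, empty_subset _⟩
  · exact ⟨sInf K, sSup K, (hKab (hK.sInf_mem hne)).1, (hKab (hK.sSup_mem hne)).2,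
      subset_Icc_csInf_csSup hK.bddBelow hK.bddAbove⟩

lemma intervalIntegral_eq_integral_of_tsupport_subset_Ioo {E : Type*} [NormedAddCommGroup E]
    [NormedSpace ℝ E] {a b : ℝ} (hab : a ≤ b) {f : ℝ → E} (hf : tsupport f ⊆ Ioo a b) :
    ∫ t in a..b, f t = ∫ t, f t := by
  rw [intervalIntegral.integral_of_le hab]
  exact setIntegral_eq_integral_of_forall_compl_eq_zero fun t ht =>
    image_eq_zero_of_notMem_tsupport fun h => ht (Ioo_subset_Ioc_self (hf h))

section Primitive

variable {E : Type*} [NormedAddCommGroup E] [NormedSpace ℝ E] [CompleteSpace E]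
  {g : ℝ → E}

lemma Continuous.hasDerivAt_primitive (hg : Continuous g) (a t : ℝ) :
    HasDerivAt (fun t => ∫ s in a..t, g s) (g t) t :=
  (hg.integral_hasStrictDerivAt a t).hasDerivAt

lemma Continuous.deriv_primitive (hg : Continuous g) (a : ℝ) :
    deriv (fun t => ∫ s in a..t, g s) = g :=
  funext fun t => (hg.hasDerivAt_primitive a t).deriv

lemma Continuous.contDiff_one_primitive (hg : Continuous g) (a : ℝ) :
    ContDiff ℝ 1 (fun t => ∫ s in a..t, g s) :=
  contDiff_one_iff_deriv.2
    ⟨fun t => (hg.hasDerivAt_primitive a t).differentiableAt, (hg.deriv_primitive a).symm ▸ hg⟩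

end Primitive

lemma tsupport_primitive_subset_Ioo {a b : ℝ} {g : ℝ → ℝ} (hg : Continuous g)
    (hgc : HasCompactSupport g) (hgab : tsupport g ⊆ Ioo a b) (hint : ∫ s in a..b, g s = 0) :
    tsupport (fun t => ∫ s in a..t, g s) ⊆ Ioo a b := by
  obtain ⟨c, d, hac, hdb, hcd⟩ := hgc.isCompact.exists_subset_Icc_of_subset_Ioo hgab
  have vanish : ∀ {x y : ℝ}, (∀ s ∈ uIcc x y, s < c ∨ d < s) → ∫ s in x..y, g s = 0 := by
    intro x y h
    refine (intervalIntegral.integral_congr (g := 0) fun s hs => ?_).trans (by simp)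
    refine image_eq_zero_of_notMem_tsupport fun hs' => ?_
    have := hcd hs'
    rcases h s hs with h | h <;> linarith [this.1, this.2]
  have hsupp : Function.support (fun t => ∫ s in a..t, g s) ⊆ Icc c d := by
    intro t ht
    by_contra hout
    refine ht ?_
    rcases not_and_or.mp hout with htc | htd
    · refine vanish fun s hs => Or.inl ?_
      rcases mem_uIcc.1 hs with h | h <;> linarith [h.2, not_le.1 htc]
    · show ∫ s in a..t, g s = 0
      rw [← intervalIntegral.integral_add_adjacent_intervals (hg.intervalIntegrable a b)
        (hg.intervalIntegrable b t), hint, zero_add]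
      refine vanish fun s hs => Or.inr ?_
      rcases mem_uIcc.1 hs with h | h <;> linarith [h.1, not_le.1 htd]
  exact (closure_minimal hsupp isClosed_Icc).trans (Icc_subset_Ioo hac hdb)

lemma exists_continuous_tsupport_subset_Ioo_integral_eq_one {a b : ℝ} (hab : a < b) :
    ∃ η : ℝ → ℝ, Continuous η ∧ HasCompactSupport η ∧ tsupport η ⊆ Ioo a b ∧
      ∫ t in a..b, η t = 1 := by
  let φ : ContDiffBump ((a + b) / 2) := ⟨(b - a) / 4, (b - a) / 3, by linarith, by linarith⟩
  have hsupp : tsupport (φ.normed volume) ⊆ Ioo a b := by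
    rw [φ.tsupport_normed_eq, Real.closedBall_eq_Icc]
    exact Icc_subset_Ioo (by simp only [φ]; linarith) (by simp only [φ]; linarith)
  refine ⟨φ.normed volume, φ.continuous_normed, φ.hasCompactSupport_normed, hsupp, ?_⟩
  rw [intervalIntegral_eq_integral_of_tsupport_subset_Ioo hab.le hsupp, φ.integral_normed]

section DuBoisReymond

variable {a b : ℝ} {k : ℝ → ℝ}

lemma integral_mul_eq_zero_of_integral_mul_deriv_eq_zero
    (hweak : ∀ ψ : ℝ → ℝ, ContDiff ℝ 1 ψ → tsupport ψ ⊆ Ioo a b →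
      ∫ t in a..b, k t * deriv ψ t = 0)
    {w : ℝ → ℝ} (hw : Continuous w) (hwc : HasCompactSupport w) (hwab : tsupport w ⊆ Ioo a b)
    (hint : ∫ t in a..b, w t = 0) :
    ∫ t in a..b, k t * w t = 0 := by
  simpa only [hw.deriv_primitive a] using
    hweak _ (hw.contDiff_one_primitive a) (tsupport_primitive_subset_Ioo hw hwc hwab hint)

/-- The du Bois-Reymond lemma. -/
theorem eqOn_const_of_integral_mul_deriv_eq_zero (hab : a < b) (hk : Continuous k)
    (hweak : ∀ ψ : ℝ → ℝ, ContDiff ℝ 1 ψ → tsupport ψ ⊆ Ioo a b →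
      ∫ t in a..b, k t * deriv ψ t = 0) :
    EqOn k (fun _ => k a) (Icc a b) := by
  obtain ⟨η, hη, hηc, hηab, hη1⟩ := exists_continuous_tsupport_subset_Ioo_integral_eq_one hab
  set c := ∫ t in a..b, k t * η t
  have horth : ∀ g : ℝ → ℝ, ContDiff ℝ ∞ g → HasCompactSupport g → tsupport g ⊆ Ioo a b →
      ∫ t, g t • (k t - c) = 0 := by
    intro g hg hgc hgab
    set I := ∫ t in a..b, g t
    have hIη : Continuous fun t => I * η t := continuous_const.mul hη
    have hmean : ∫ t in a..b, k t * (g t - I * η t) = 0 :=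
      integral_mul_eq_zero_of_integral_mul_deriv_eq_zero hweak (hg.continuous.sub hIη)
        (hgc.sub (hηc.mul_left (f := fun _ => I)))
        ((tsupport_sub _ _).trans (union_subset hgab (tsupport_mul_subset_right.trans hηab)))
        (by rw [intervalIntegral.integral_sub (hg.continuous.intervalIntegrable a b)
              (hIη.intervalIntegrable a b), intervalIntegral.integral_const_mul, hη1, mul_one,
              sub_self])
    rw [← intervalIntegral_eq_integral_of_tsupport_subset_Ioo hab.le
      ((tsupport_smul_subset_left _ _).trans hgab)]
    have hgcont := hg.continuous
    simp only [smul_eq_mul, mul_comm (g _), sub_mul, mul_sub, mul_left_comm (k _)] at hmean ⊢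
    rw [intervalIntegral.integral_sub, intervalIntegral.integral_const_mul] at hmean ⊢
    · linarith
    all_goals exact Continuous.intervalIntegrable (by fun_prop) _ _
  have hae := isOpen_Ioo.ae_eq_zero_of_integral_contDiff_smul_eq_zero
    ((hk.sub continuous_const).locallyIntegrable.locallyIntegrableOn _) horth
  have hIoo : EqOn k (fun _ => c) (Ioo a b) :=
    Measure.eqOn_Ioo_of_ae_eq (μ := volume)
      ((ae_restrict_iff' measurableSet_Ioo).2 (hae.mono fun t ht ht' => sub_eq_zero.1 (ht ht')))
      hk.continuousOn continuousOn_const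
  have hIcc : EqOn k (fun _ => c) (Icc a b) := by
    rw [← closure_Ioo hab.ne]
    exact hIoo.closure hk continuous_const
  exact fun t ht => (hIcc ht).trans (hIcc (left_mem_Icc.2 hab.le)).symm

end DuBoisReymond

section Vector

variable {E : Type*} [NormedAddCommGroup E] [NormedSpace ℝ E] {a b : ℝ}

theorem eqOn_const_of_integral_apply_deriv_eq_zero (hab : a < b) {Φ : ℝ → E →L[ℝ] ℝ}
    (hΦ : Continuous Φ)
    (hweak : ∀ v : ℝ → E, ContDiff ℝ 1 v → tsupport v ⊆ Ioo a b →
      ∫ t in a..b, Φ t (deriv v t) = 0) :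
    EqOn Φ (fun _ => Φ a) (Icc a b) := by
  intro t ht
  ext w
  refine eqOn_const_of_integral_mul_deriv_eq_zero hab (hΦ.clm_apply continuous_const)
    (fun ψ hψ hψab => ?_) ht
  have hderiv : deriv (fun s => ψ s • w) = fun s => deriv ψ s • w :=
    funext fun s => ((hψ.differentiable one_ne_zero s).hasDerivAt.smul_const w).deriv
  simpa [hderiv, mul_comm] using hweak (fun s => ψ s • w) (hψ.smul contDiff_const)
    ((tsupport_smul_subset_left _ fun _ => w).trans hψab)

lemma integral_apply_eq_neg_integral_primitive_apply_deriv {G : ℝ → E →L[ℝ] ℝ}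
    (hG : Continuous G) {v : ℝ → E} (hv : ContDiff ℝ 1 v) (hva : v a = 0) (hvb : v b = 0) :
    ∫ t in a..b, G t (v t) = -∫ t in a..b, (∫ s in a..t, G s) (deriv v t) := by
  have hH := (hG.contDiff_one_primitive a).continuous
  have hv' := hv.continuous_deriv le_rfl
  have hparts : ∫ t in a..b, G t (v t) + (∫ s in a..t, G s) (deriv v t) = 0 := by
    rw [intervalIntegral.integral_eq_sub_of_hasDerivAt
      (fun t _ => (hG.hasDerivAt_primitive a t).clm_apply
        (hv.differentiable one_ne_zero t).hasDerivAt)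
      (((hG.clm_apply hv.continuous).add (hH.clm_apply hv')).intervalIntegrable a b), hva, hvb]
    simp
  rw [intervalIntegral.integral_add ((hG.clm_apply hv.continuous).intervalIntegrable a b)
    ((hH.clm_apply hv').intervalIntegrable a b)] at hparts
  exact eq_neg_of_add_eq_zero_left hparts

theorem eqOn_primitive_add_of_integral_apply_add_apply_deriv_eq_zero (hab : a < b)
    {F G : ℝ → E →L[ℝ] ℝ} (hF : Continuous F) (hG : Continuous G)
    (hweak : ∀ v : ℝ → E, ContDiff ℝ 1 v → tsupport v ⊆ Ioo a b →
      ∫ t in a..b, G t (v t) + F t (deriv v t) = 0) :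
    EqOn F (fun t => (∫ s in a..t, G s) + F a) (Icc a b) := by
  set H := fun t => ∫ s in a..t, G s
  have hH : Continuous H := (hG.contDiff_one_primitive a).continuous
  have hFH : EqOn (F - H) (fun _ => (F - H) a) (Icc a b) := by
    refine eqOn_const_of_integral_apply_deriv_eq_zero hab (hF.sub hH) fun v hv hvab => ?_
    have hend : ∀ x ∉ Ioo a b, v x = 0 := fun x hx =>
      image_eq_zero_of_notMem_tsupport (hx <| hvab ·)
    have hv' := hv.continuous_deriv le_rfl
    have hFv' := (hF.clm_apply hv').intervalIntegrable (μ := volume) a b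
    have hHv' := (hH.clm_apply hv').intervalIntegrable (μ := volume) a b
    have hweakv := hweak v hv hvab
    rw [intervalIntegral.integral_add ((hG.clm_apply hv.continuous).intervalIntegrable a b) hFv',
      integral_apply_eq_neg_integral_primitive_apply_deriv hG hv (hend a (by simp))
        (hend b (by simp))] at hweakv
    simp only [Pi.sub_apply, sub_apply]
    rw [intervalIntegral.integral_sub hFv' hHv']
    linarith
  intro t ht
  simpa [H, sub_eq_iff_eq_add'] using hFH ht

end Vector

theorem euler_lagrange_regularity_general
    (n : ℕ) (a b : ℝ) (hab : a < b)
    (L : ℝ × (Fin n → ℝ) × (Fin n → ℝ) → ℝ)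
    (Lq Lv : ℝ × (Fin n → ℝ) × (Fin n → ℝ) → ((Fin n → ℝ) →L[ℝ] ℝ))
    (hLq : Continuous Lq) (hLv : Continuous Lv)
    (q : ℝ → (Fin n → ℝ)) (hq : ContDiff ℝ 1 q)
    (hweak : ∀ v : ℝ → (Fin n → ℝ), ContDiff ℝ 1 v → tsupport v ⊆ Set.Ioo a b →
      (∫ t in a..b, (Lq (t, q t, deriv q t)) (v t)
        + (Lv (t, q t, deriv q t)) (deriv v t)) = 0) :
    ContDiffOn ℝ 1 (fun s => Lv (s, q s, deriv q s)) (Set.Icc a b) ∧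
      ∀ t ∈ Set.Icc a b,
        HasDerivWithinAt (fun s => Lv (s, q s, deriv q s))
          (Lq (t, q t, deriv q t)) (Set.Icc a b) t := by
  have hγ : Continuous fun t => (t, q t, deriv q t) :=
    continuous_id.prodMk (hq.continuous.prodMk (hq.continuous_deriv le_rfl))
  have hG : Continuous fun t => Lq (t, q t, deriv q t) := hLq.comp hγ
  have hF := eqOn_primitive_add_of_integral_apply_add_apply_deriv_eq_zero hab (hLv.comp hγ) hG
    hweak
  exact ⟨((hG.contDiff_one_primitive a).add contDiff_const).contDiffOn.congr hF, fun t ht =>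
    ((hG.hasDerivAt_primitive a t).add_const _).hasDerivWithinAt.congr hF (hF ht)⟩

/-- Euler–Lagrange regularity: let `L(t,q,q̇)` be continuous with
continuous partial derivatives `∂L/∂q` and `∂L/∂q̇`, and let `q` be a `C¹` curve
satisfying the weak Euler–Lagrange equation against all `C¹` test fields `v` with
support in `(a,b)`. Then `t ↦ ∂L/∂q̇(t,q(t),q̇(t))` is of class `C¹` on `[a,b]` and
`(d/dt) ∂L/∂q̇(t,q(t),q̇(t)) = ∂L/∂q(t,q(t),q̇(t))` there. -/
theorem euler_lagrange_regularity
    (n : ℕ) (a b : ℝ) (hab : a < b)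
    (L : ℝ × (Fin n → ℝ) × (Fin n → ℝ) → ℝ) (hL : Continuous L)
    (Lq Lv : ℝ × (Fin n → ℝ) × (Fin n → ℝ) → ((Fin n → ℝ) →L[ℝ] ℝ))
    (hLq : Continuous Lq) (hLv : Continuous Lv)
    (hdq : ∀ (t : ℝ) (q v : Fin n → ℝ),
      HasFDerivAt (fun q' => L (t, q', v)) (Lq (t, q, v)) q)
    (hdv : ∀ (t : ℝ) (q v : Fin n → ℝ),
      HasFDerivAt (fun v' => L (t, q, v')) (Lv (t, q, v)) v)
    (q : ℝ → (Fin n → ℝ)) (hq : ContDiff ℝ 1 q)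
    (hweak : ∀ v : ℝ → (Fin n → ℝ), ContDiff ℝ 1 v → tsupport v ⊆ Set.Ioo a b →
      (∫ t in a..b, (Lq (t, q t, deriv q t)) (v t)
        + (Lv (t, q t, deriv q t)) (deriv v t)) = 0) :
    ContDiffOn ℝ 1 (fun s => Lv (s, q s, deriv q s)) (Set.Icc a b) ∧
      ∀ t ∈ Set.Icc a b,
        HasDerivWithinAt (fun s => Lv (s, q s, deriv q s))
          (Lq (t, q t, deriv q t)) (Set.Icc a b) t :=
  euler_lagrange_regularity_general n a b hab L Lq Lv hLq hLv q hq hweak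
end
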